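/- arXiv:2406.11123 — 9 statements merged into one kernel-verified Lean document; each statement's English description precedes it below -/
import Mathlib

section
/- Let f : (a,b) → ℝ with 0 ≤ a < b be a smooth solution of f''/(1+(f')²) = (r − (n−1)/r)·f' − f − λ·√(1+(f')²). If at some point c ∈ (a,b) both f''(c) = 0 and f'''(c) = 0 hold, then f is the constant function f ≡ −λ on (a,b). -/
open Set Metric Real

theorem stmt_3 (n : ℕ) (hn : 2 ≤ n) (lam : ℝ) (a b : ℝ) (ha : 0 ≤ a) (hab : a < b)
    (f : ℝ → ℝ) (hf : ContDiffOn ℝ (⊤ : ℕ∞) f (Set.Ioo a b))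
    (hode : ∀ r ∈ Set.Ioo a b,
      deriv (deriv f) r / (1 + (deriv f r) ^ 2)
        = (r - ((n : ℝ) - 1) / r) * deriv f r - f r
            - lam * Real.sqrt (1 + (deriv f r) ^ 2))
    (c : ℝ) (hc : c ∈ Set.Ioo a b)
    (h2 : deriv (deriv f) c = 0) (h3 : deriv (deriv (deriv f)) c = 0) :
    ∀ r ∈ Set.Ioo a b, f r = -lam := by
  classical
  have hopen : IsOpen (Set.Ioo a b) := isOpen_Ioo
  set f1 := deriv f with hf1def
  set f2 := deriv f1 with hf2def
  set f3 := deriv f2 with hf3def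
  have hc0 : 0 < c := lt_of_le_of_lt ha hc.1
  have hf1 : ContDiffOn ℝ (⊤ : ℕ∞) f1 (Set.Ioo a b) := hf.deriv_of_isOpen hopen (by simp)
  have hf2 : ContDiffOn ℝ (⊤ : ℕ∞) f2 (Set.Ioo a b) := hf1.deriv_of_isOpen hopen (by simp)
  have hd : ∀ r ∈ Set.Ioo a b, HasDerivAt f (f1 r) r := by
    intro r hr
    exact ((hf.differentiableOn (by simp)).differentiableAt (hopen.mem_nhds hr)).hasDerivAt
  have hd1 : ∀ r ∈ Set.Ioo a b, HasDerivAt f1 (f2 r) r := by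
    intro r hr
    exact ((hf1.differentiableOn (by simp)).differentiableAt (hopen.mem_nhds hr)).hasDerivAt
  have hd2 : ∀ r ∈ Set.Ioo a b, HasDerivAt f2 (f3 r) r := by
    intro r hr
    exact ((hf2.differentiableOn (by simp)).differentiableAt (hopen.mem_nhds hr)).hasDerivAt
  have hpos : ∀ r : ℝ, (0:ℝ) < 1 + (f1 r)^2 := fun r => by positivity
  -- step 1: f1 c = 0 and f c = -lam
  have hL : HasDerivAt (fun r => f2 r / (1 + (f1 r)^2)) 0 c := by
    have h1 : HasDerivAt (fun r => 1 + (f1 r)^2) (2 * f1 c * f2 c) c := by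
      have := ((hd1 c hc).pow 2).const_add 1
      simpa [mul_comm, mul_assoc, mul_left_comm] using this
    have := (hd2 c hc).div h1 (ne_of_gt (hpos c))
    simp [h2, h3] at this; exact this
  have hR : HasDerivAt (fun r => (r - ((n : ℝ) - 1) / r) * f1 r - f r
      - lam * Real.sqrt (1 + (f1 r) ^ 2)) ((((n:ℝ)-1)/c^2) * f1 c) c := by
    have h1 : HasDerivAt (fun r : ℝ => r - ((n:ℝ)-1)/r) (1 + ((n:ℝ)-1)/c^2) c := by
      have hinv : HasDerivAt (fun r : ℝ => ((n:ℝ)-1)/r) (-(((n:ℝ)-1)/c^2)) c := by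
        simpa [div_eq_mul_inv, neg_mul, mul_comm] using
          ((hasDerivAt_inv (ne_of_gt hc0)).const_mul ((n:ℝ)-1))
      have := (hasDerivAt_id c).sub hinv; simp [sub_neg_eq_add] at this; exact this
    have hsq : HasDerivAt (fun r => 1 + (f1 r)^2) 0 c := by
      have := ((hd1 c hc).pow 2).const_add 1
      simpa [h2] using this
    have hsqrt : HasDerivAt (fun r => Real.sqrt (1 + (f1 r)^2)) 0 c := by
      have hx : (1 + (f1 c)^2) ≠ 0 := ne_of_gt (hpos c)
      have := (Real.hasDerivAt_sqrt hx).comp c hsq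
      simp at this; exact this
    have := ((h1.mul (hd1 c hc)).sub (hd c hc)).sub (hsqrt.const_mul lam)
    refine this.congr_deriv ?_
    rw [h2]
    ring
  have heqd : deriv (fun r => f2 r / (1 + (f1 r)^2)) c
      = deriv (fun r => (r - ((n : ℝ) - 1) / r) * f1 r - f r
      - lam * Real.sqrt (1 + (f1 r) ^ 2)) c := by
    apply Filter.EventuallyEq.deriv_eq
    filter_upwards [hopen.mem_nhds hc] with r hr
    exact hode r hr
  have hf1c0 : f1 c = 0 := by
    have h0 : (((n:ℝ)-1)/c^2) * f1 c = 0 := by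
      rw [← hR.deriv, ← heqd, hL.deriv]
    have hn1 : (0:ℝ) < (n:ℝ) - 1 := by
      have : (2:ℝ) ≤ (n:ℝ) := by exact_mod_cast hn
      linarith
    have : ((n:ℝ)-1)/c^2 ≠ 0 := by positivity
    exact (mul_eq_zero.mp h0).resolve_left this
  have hfc0 : f c = -lam := by
    have := hode c hc
    rw [hf1c0, h2] at this
    norm_num at this
    linarith
  -- multiplied form of the ODE
  have hodem : ∀ r ∈ Set.Ioo a b,
      f2 r = (1 + (f1 r)^2) * ((r - ((n:ℝ)-1)/r) * f1 r - f r - lam * Real.sqrt (1 + (f1 r)^2)) := by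
    intro r hr
    have := hode r hr
    rw [div_eq_iff (ne_of_gt (hpos r))] at this
    rw [this]; ring
  -- step 2: local uniqueness around any point where (f, f1) = (-lam, 0)
  have key : ∀ r₀ ∈ Set.Ioo a b, f r₀ = -lam → f1 r₀ = 0 →
      ∀ᶠ r in nhds r₀, f r = -lam := by
    intro r₀ hr₀ h0 h1
    have hr0pos : 0 < r₀ := lt_of_le_of_lt ha hr₀.1
    set p₀ : ℝ × ℝ := (-lam, 0) with hp₀
    set v : ℝ → ℝ × ℝ → ℝ × ℝ := fun t p =>
      (p.2, (1 + p.2^2) * ((t - ((n:ℝ)-1)/t) * p.2 - p.1 - lam * Real.sqrt (1 + p.2^2))) with hv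
    set w : ℝ × (ℝ × ℝ) → ℝ × ℝ := fun q => v q.1 q.2 with hwdef
    have hw : ContDiffAt ℝ 1 w (r₀, p₀) := by
      have hy : ContDiffAt ℝ 1 (fun q : ℝ × (ℝ × ℝ) => q.2.2) (r₀, p₀) :=
        (contDiff_snd.comp contDiff_snd).contDiffAt
      have hx : ContDiffAt ℝ 1 (fun q : ℝ × (ℝ × ℝ) => q.2.1) (r₀, p₀) :=
        (contDiff_fst.comp contDiff_snd).contDiffAt
      have htc : ContDiffAt ℝ 1 (fun q : ℝ × (ℝ × ℝ) => q.1) (r₀, p₀) :=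
        contDiff_fst.contDiffAt
      have hsq : ContDiffAt ℝ 1 (fun q : ℝ × (ℝ × ℝ) => 1 + q.2.2^2) (r₀, p₀) :=
        contDiffAt_const.add (hy.pow 2)
      have hsqrt : ContDiffAt ℝ 1 (fun q : ℝ × (ℝ × ℝ) => Real.sqrt (1 + q.2.2^2)) (r₀, p₀) := by
        have hne : (1 + ((r₀, p₀).2.2)^2) ≠ 0 := by positivity
        exact (Real.contDiffAt_sqrt hne).comp (r₀, p₀) hsq
      have hdiv : ContDiffAt ℝ 1 (fun q : ℝ × (ℝ × ℝ) => ((n:ℝ)-1)/q.1) (r₀, p₀) :=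
        contDiffAt_const.div htc (ne_of_gt hr0pos)
      exact hy.prodMk <|
        hsq.mul <| (((htc.sub hdiv).mul hy).sub hx).sub (contDiffAt_const.mul hsqrt)
    obtain ⟨K, t, ht, hlip⟩ := hw.exists_lipschitzOnWith
    obtain ⟨δ, hδ, hball⟩ := Metric.mem_nhds_iff.mp ht
    have hlip' : ∀ s ∈ ball r₀ δ, LipschitzOnWith K (v s) (ball p₀ δ) := by
      intro s hs p hp q hq
      have hmem : ∀ x ∈ ball p₀ δ, (s, x) ∈ t := by
        intro x hx
        apply hball
        rw [← ball_prod_same]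
        exact ⟨hs, hx⟩
      have := hlip (hmem p hp) (hmem q hq)
      calc edist (v s p) (v s q) = edist (w (s, p)) (w (s, q)) := rfl
        _ ≤ K * edist (s, p) (s, q) := this
        _ = K * edist p q := by
            rw [Prod.edist_eq]
            simp
    set v' : ℝ → ℝ × ℝ → ℝ × ℝ := fun s => if dist s r₀ < δ then v s else fun _ => 0 with hv'
    have hv'lip : ∀ s, LipschitzOnWith K (v' s) (ball p₀ δ) := by
      intro s
      by_cases hs : dist s r₀ < δ
      · simpa [hv', hs] using hlip' s (mem_ball.mpr hs)
      · simp only [hv', hs, if_false]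
        exact ((LipschitzWith.const (0 : ℝ × ℝ)).weaken (zero_le : (0:NNReal) ≤ K)).lipschitzOnWith
    set g : ℝ → ℝ × ℝ := fun r => (f r, f1 r) with hg
    have hgc : ContinuousAt g r₀ :=
      ((hd r₀ hr₀).continuousAt).prodMk ((hd1 r₀ hr₀).continuousAt)
    have hg0 : g r₀ = p₀ := by simp [hg, h0, h1, hp₀]
    have hgball : ∀ᶠ r in nhds r₀, g r ∈ ball p₀ δ := by
      have : ball p₀ δ ∈ nhds (g r₀) := by rw [hg0]; exact ball_mem_nhds _ hδ
      exact hgc this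
    obtain ⟨ε₁, hε₁, hε₁sub⟩ := Metric.eventually_nhds_iff_ball.mp hgball
    obtain ⟨ε₂, hε₂, hε₂sub⟩ := Metric.mem_nhds_iff.mp (hopen.mem_nhds hr₀)
    set ε := min (min ε₁ ε₂) δ with hε
    have hεpos : 0 < ε := lt_min (lt_min hε₁ hε₂) hδ
    have hsub : ball r₀ ε ⊆ Set.Ioo a b := fun x hx =>
      hε₂sub (ball_subset_ball (le_trans (min_le_left _ _) (min_le_right _ _)) hx)
    have hsubδ : ball r₀ ε ⊆ ball r₀ δ := ball_subset_ball (min_le_right _ _)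
    have hsub1 : ball r₀ ε ⊆ ball r₀ ε₁ :=
      ball_subset_ball (le_trans (min_le_left _ _) (min_le_left _ _))
    have hkey : Set.EqOn g (fun _ => p₀) (Set.Ioo (r₀ - ε) (r₀ + ε)) := by
      apply ODE_solution_unique_of_mem_Ioo (v := v') (s := fun _ => ball p₀ δ) (fun s _ => hv'lip s)
        (by simp [hεpos] : r₀ ∈ Set.Ioo (r₀ - ε) (r₀ + ε))
      · intro s hs
        rw [← Real.ball_eq_Ioo] at hs
        have hsab : s ∈ Set.Ioo a b := hsub hs
        have hgd : HasDerivAt g (f1 s, f2 s) s := (hd s hsab).prodMk (hd1 s hsab)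
        constructor
        · refine hgd.congr_deriv ?_
          simp only [hv', if_pos (mem_ball.mp (hsubδ hs))]
          simp only [hv, hg]
          rw [hodem s hsab]
        · exact hε₁sub s (hsub1 hs)
      · intro s hs
        rw [← Real.ball_eq_Ioo] at hs
        constructor
        · have : v' s p₀ = 0 := by
            simp only [hv', if_pos (mem_ball.mp (hsubδ hs)), hv, hp₀]
            norm_num [Real.sqrt_one]
          rw [this]
          exact hasDerivAt_const _ _
        · exact mem_ball_self hδ
      · exact hg0
    have : Set.Ioo (r₀ - ε) (r₀ + ε) ∈ nhds r₀ := Ioo_mem_nhds (by linarith) (by linarith)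
    filter_upwards [this] with r hr
    have := congrArg Prod.fst (hkey hr)
    simpa [hg, hp₀] using this
  -- step 3: connectedness
  have hfcont : ContinuousOn f (Set.Ioo a b) := hf.continuousOn
  have hf1cont : ContinuousOn f1 (Set.Ioo a b) := hf1.continuousOn
  set T : Set ℝ := {r | r ∈ Set.Ioo a b ∧ f r = -lam ∧ f1 r = 0} with hT
  set W : Set ℝ := Set.Ioo a b ∩ (fun r => (f r, f1 r)) ⁻¹' {((-lam : ℝ), (0:ℝ))}ᶜ with hW
  have hTopen : IsOpen T := by
    rw [isOpen_iff_mem_nhds]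
    rintro r₀ ⟨hr₀, h0, h1⟩
    obtain ⟨U, hU, hUopen, hUr₀⟩ := _root_.eventually_nhds_iff.mp (key r₀ hr₀ h0 h1)
    have hsubT : U ∩ Set.Ioo a b ⊆ T := by
      rintro r ⟨hrU, hrab⟩
      refine ⟨hrab, hU r hrU, ?_⟩
      have : f =ᶠ[nhds r] fun _ => -lam := by
        filter_upwards [hUopen.mem_nhds hrU] with x hx
        exact hU x hx
      rw [hf1def, this.deriv_eq]
      simp
    exact Filter.mem_of_superset ((hUopen.inter hopen).mem_nhds ⟨hUr₀, hr₀⟩) hsubT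
  have hWopen : IsOpen W :=
    (hfcont.prodMk hf1cont).isOpen_inter_preimage hopen (isOpen_compl_iff.mpr isClosed_singleton)
  have hcover : Set.Ioo a b ⊆ T ∪ W := by
    intro r hr
    by_cases h : (f r, f1 r) = ((-lam : ℝ), (0:ℝ))
    · left
      rw [Prod.ext_iff] at h
      exact ⟨hr, h.1, h.2⟩
    · right
      exact ⟨hr, h⟩
  have hpc := isPreconnected_Ioo (a := a) (b := b)
  have hTc : (Set.Ioo a b ∩ T).Nonempty := ⟨c, hc, hc, hfc0, hf1c0⟩
  intro r hr
  by_contra hne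
  have hrW : r ∈ W := by
    refine ⟨hr, ?_⟩
    simp only [Set.mem_preimage, Set.mem_compl_iff, Set.mem_singleton_iff]
    intro h
    exact hne (congrArg Prod.fst h)
  have hWne : (Set.Ioo a b ∩ W).Nonempty := ⟨r, hr, hrW⟩
  obtain ⟨x, hx, ⟨_, hx1, hx2⟩, _, hx3⟩ := hpc T W hTopen hWopen hcover hTc hWne
  exact hx3 (by simp [hx1, hx2])
end

section
/- Let f : (a,b) → ℝ with 0 ≤ a < b be a smooth non-constant solution of f''/(1+(f')²) = (r − (n−1)/r)·f' − f − λ·√(1+(f')²), and suppose f''(c) = 0 at some c ∈ (a,b). Then f'(c)·f'''(c) > 0. -/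
set_option maxHeartbeats 1000000

open Set Real

lemma gronwall_zero_aux (w dw : ℝ → ℝ) (K : ℝ) (l m : ℝ)
    (hw : ∀ r ∈ Icc l m, HasDerivAt w (dw r) r)
    (hwnn : ∀ r ∈ Icc l m, 0 ≤ w r)
    (hest : ∀ r ∈ Icc l m, |dw r| ≤ K * w r)
    (c0 : ℝ) (hc0 : c0 ∈ Icc l m) (hwc : w c0 = 0) :
    ∀ r ∈ Icc l m, w r = 0 := by
  intro x hx
  rcases le_total c0 x with hcx | hcx
  · -- forward: φ = w * exp(-K r) is antitone on Icc c0 m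
    set φ : ℝ → ℝ := fun r => w r * Real.exp (-K * r) with hφdef
    have hsub : Icc c0 m ⊆ Icc l m := Icc_subset_Icc hc0.1 le_rfl
    have hφd : ∀ r ∈ Icc c0 m, HasDerivAt φ
        ((dw r - K * w r) * Real.exp (-K * r)) r := by
      intro r hr
      have he : HasDerivAt (fun r : ℝ => Real.exp (-K * r))
          (Real.exp (-K * r) * (-K)) r := by
        simpa using (((hasDerivAt_id r).const_mul (-K)).exp)
      have := (hw r (hsub hr)).fun_mul he
      refine this.congr_deriv ?_
      ring
    have hanti : AntitoneOn φ (Icc c0 m) := by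
      apply antitoneOn_of_deriv_nonpos (convex_Icc _ _)
      · exact fun r hr => ((hφd r hr).continuousAt).continuousWithinAt
      · intro r hr
        rw [interior_Icc] at hr
        exact ((hφd r (Ioo_subset_Icc_self hr)).differentiableAt).differentiableWithinAt
      · intro r hr
        rw [interior_Icc] at hr
        rw [(hφd r (Ioo_subset_Icc_self hr)).deriv]
        have h1 := hest r (hsub (Ioo_subset_Icc_self hr))
        have h2 : dw r ≤ K * w r := le_trans (le_abs_self _) h1
        have h3 : (0:ℝ) < Real.exp (-K * r) := Real.exp_pos _
        nlinarith
    have h4 : φ x ≤ φ c0 := hanti ⟨le_rfl, le_trans hcx hx.2⟩ ⟨hcx, hx.2⟩ hcx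
    have h5 : φ c0 = 0 := by simp [hφdef, hwc]
    have h6 : (0:ℝ) < Real.exp (-K * x) := Real.exp_pos _
    have h7 := hwnn x hx
    have h4' : w x * Real.exp (-K * x) ≤ 0 := by simpa [hφdef, hwc] using h4
    nlinarith [h4', h6, h7]
  · -- backward: ψ = w * exp(K r) is monotone on Icc l c0
    set ψ : ℝ → ℝ := fun r => w r * Real.exp (K * r) with hψdef
    have hsub : Icc l c0 ⊆ Icc l m := Icc_subset_Icc le_rfl hc0.2
    have hψd : ∀ r ∈ Icc l c0, HasDerivAt ψ
        ((dw r + K * w r) * Real.exp (K * r)) r := by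
      intro r hr
      have he : HasDerivAt (fun r : ℝ => Real.exp (K * r))
          (Real.exp (K * r) * K) r := by
        simpa using (((hasDerivAt_id r).const_mul K).exp)
      have := (hw r (hsub hr)).fun_mul he
      refine this.congr_deriv ?_
      ring
    have hmono : MonotoneOn ψ (Icc l c0) := by
      apply monotoneOn_of_deriv_nonneg (convex_Icc _ _)
      · exact fun r hr => ((hψd r hr).continuousAt).continuousWithinAt
      · intro r hr
        rw [interior_Icc] at hr
        exact ((hψd r (Ioo_subset_Icc_self hr)).differentiableAt).differentiableWithinAt
      · intro r hr
        rw [interior_Icc] at hr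
        rw [(hψd r (Ioo_subset_Icc_self hr)).deriv]
        have h1 := hest r (hsub (Ioo_subset_Icc_self hr))
        have h2 : -(K * w r) ≤ dw r := neg_le_of_abs_le h1
        have h3 : (0:ℝ) < Real.exp (K * r) := Real.exp_pos _
        nlinarith
    have h4 : ψ x ≤ ψ c0 := hmono ⟨hx.1, hcx⟩ ⟨le_trans hx.1 hcx, le_rfl⟩ hcx
    have h5 : ψ c0 = 0 := by simp [hψdef, hwc]
    have h6 : (0:ℝ) < Real.exp (K * x) := Real.exp_pos _
    have h7 := hwnn x hx
    have h4' : w x * Real.exp (K * x) ≤ 0 := by simpa [hψdef, hwc] using h4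
    nlinarith [h4', h6, h7]

lemma est_aux (x y q lam M A : ℝ) (hx : |x| ≤ M) (hy : |y| ≤ M) (hq : |q| ≤ A) :
    |2*x*y + 2*y*((1+y^2)*(q*y - x - lam*(Real.sqrt (1+y^2) - 1)))|
      ≤ (1 + (1+M^2)*(1+2*A+2 * |lam| * M)) * (x^2+y^2) := by
  set sq := Real.sqrt (1+y^2) with hsqdef
  have hs1 : sq^2 = 1 + y^2 := Real.sq_sqrt (by positivity)
  have hs0 : 0 ≤ sq := Real.sqrt_nonneg _
  have hs2 : 1 ≤ sq := by nlinarith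
  have hs3 : sq - 1 ≤ y^2 := by nlinarith
  set p := |x| with hpdef
  set t := |y| with htdef
  have hp0 : 0 ≤ p := abs_nonneg _
  have ht0 : 0 ≤ t := abs_nonneg _
  have hp2 : p^2 = x^2 := sq_abs x
  have ht2 : t^2 = y^2 := sq_abs y
  have hM0 : 0 ≤ M := le_trans hp0 hx
  have hA0 : 0 ≤ A := le_trans (abs_nonneg q) hq
  set L := |lam| with hLdef
  have hL0 : 0 ≤ L := abs_nonneg _
  -- bound the inner bracket
  have e4 : |q*y - x - lam*(sq - 1)| ≤ A*t + p + L*y^2 := by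
    have t1 : |q*y - x - lam*(sq-1)| ≤ |q*y - x| + |lam*(sq-1)| := by
      simpa [sub_eq_add_neg, abs_neg] using abs_add_le (q*y - x) (-(lam*(sq-1)))
    have t2 : |q*y - x| ≤ |q*y| + |x| := by
      simpa [sub_eq_add_neg, abs_neg] using abs_add_le (q*y) (-x)
    have t3 : |q*y| = |q| * t := abs_mul q y
    have t4 : |lam*(sq-1)| = L*(sq-1) := by
      rw [abs_mul, abs_of_nonneg (by linarith : (0:ℝ) ≤ sq - 1)]
    have t5 : |q| * t ≤ A*t := mul_le_mul_of_nonneg_right hq ht0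
    have t6 : L*(sq-1) ≤ L*y^2 := mul_le_mul_of_nonneg_left hs3 hL0
    calc |q*y - x - lam*(sq-1)| ≤ |q*y| + |x| + |lam*(sq-1)| := by linarith
      _ ≤ A*t + p + L*y^2 := by rw [t3, t4]; linarith
  -- bound the whole expression
  have e1 : |2*x*y + 2*y*((1+y^2)*(q*y - x - lam*(sq - 1)))|
      ≤ 2*p*t + 2*t*(1+y^2)*(A*t + p + L*y^2) := by
    have u1 : |2*x*y| = 2*p*t := by
      rw [abs_mul, abs_mul, abs_two, ← hpdef, ← htdef]
    have u2 : |2*y*((1+y^2)*(q*y - x - lam*(sq-1)))|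
        = 2*t*(1+y^2)*|q*y - x - lam*(sq-1)| := by
      rw [abs_mul, abs_mul, abs_mul, abs_two,
        abs_of_pos (by positivity : (0:ℝ) < 1+y^2), ← htdef]
      ring
    calc |2*x*y + 2*y*((1+y^2)*(q*y - x - lam*(sq - 1)))|
        ≤ |2*x*y| + |2*y*((1+y^2)*(q*y - x - lam*(sq-1)))| := abs_add_le _ _
      _ = 2*p*t + 2*t*(1+y^2)*|q*y - x - lam*(sq-1)| := by rw [u1, u2]
      _ ≤ 2*p*t + 2*t*(1+y^2)*(A*t + p + L*y^2) := by
          have := mul_le_mul_of_nonneg_left e4 (by positivity : (0:ℝ) ≤ 2*t*(1+y^2))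
          linarith
  -- final polynomial estimate in p, t
  rw [← ht2] at e1 ⊢
  rw [← hp2]
  have i2 : L*t^2 ≤ L*M*t := by
    nlinarith [mul_le_mul_of_nonneg_right (mul_le_mul_of_nonneg_left hy hL0) ht0]
  have i4 : 2*t*(1+t^2)*(A*t + p + L*t^2) ≤ 2*t*(1+M^2)*(A*t + p + L*M*t) := by
    have h1 : A*t + p + L*t^2 ≤ A*t + p + L*M*t := by linarith
    have h2 : 0 ≤ A*t + p + L*t^2 := by positivity
    have h3 : 2*t*(1+t^2) ≤ 2*t*(1+M^2) := by
      nlinarith [mul_le_mul_of_nonneg_left (pow_le_pow_left₀ ht0 hy 2)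
        (by positivity : (0:ℝ) ≤ 2*t)]
    have h4 : 0 ≤ 2*t*(1+M^2) := by positivity
    nlinarith [mul_le_mul h3 h1 h2 h4]
  have i5 : 2*t*(1+M^2)*(A*t + p + L*M*t)
      ≤ (1+M^2)*(2*A+1+2*L*M)*(p^2+t^2) := by
    have base : 2*A*t^2 + 2*p*t + 2*L*M*t^2 ≤ (2*A+1+2*L*M)*(p^2+t^2) := by
      nlinarith [sq_nonneg (p - t), mul_nonneg hA0 (sq_nonneg p),
        mul_nonneg (mul_nonneg hL0 hM0) (sq_nonneg p)]
    nlinarith [mul_le_mul_of_nonneg_left base (by positivity : (0:ℝ) ≤ 1+M^2)]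
  have i6 : 2*p*t ≤ p^2 + t^2 := by nlinarith [sq_nonneg (p - t)]
  calc |2*x*y + 2*y*((1+t^2)*(q*y - x - lam*(sq - 1)))|
      ≤ 2*p*t + 2*t*(1+t^2)*(A*t + p + L*t^2) := e1
    _ ≤ (p^2+t^2) + (1+M^2)*(2*A+1+2*L*M)*(p^2+t^2) := by linarith
    _ = (1 + (1+M^2)*(1+2*A+2*L*M)) * (p^2+t^2) := by ring

theorem stmt_4 (n : ℕ) (hn : 2 ≤ n) (lam : ℝ) (a b : ℝ) (ha : 0 ≤ a) (hab : a < b)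
    (f : ℝ → ℝ) (hf : ContDiffOn ℝ (⊤ : ℕ∞) f (Set.Ioo a b))
    (hode : ∀ r ∈ Set.Ioo a b,
      deriv (deriv f) r / (1 + (deriv f r) ^ 2)
        = (r - ((n : ℝ) - 1) / r) * deriv f r - f r
            - lam * Real.sqrt (1 + (deriv f r) ^ 2))
    (hnc : ¬ ∀ r ∈ Set.Ioo a b, f r = -lam)
    (c : ℝ) (hc : c ∈ Set.Ioo a b) (h2 : deriv (deriv f) c = 0) :
    0 < deriv f c * deriv (deriv (deriv f)) c := by
  set S := Set.Ioo a b with hSdef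
  have hS : IsOpen S := isOpen_Ioo
  set u := deriv f with hudef
  -- smoothness of derivatives
  have hu : ContDiffOn ℝ (⊤ : ℕ∞) u S := hf.deriv_of_isOpen hS (by simp)
  have hu2 : ContDiffOn ℝ (⊤ : ℕ∞) (deriv u) S := hu.deriv_of_isOpen hS (by simp)
  -- pointwise positivity of 1 + u^2
  have hpos : ∀ r : ℝ, (0:ℝ) < 1 + u r ^ 2 := fun r => by positivity
  -- HasDerivAt facts on S
  have hfd : ∀ r ∈ S, HasDerivAt f (u r) r := by
    intro r hr
    exact ((hf.contDiffAt (hS.mem_nhds hr)).differentiableAt (by simp)).hasDerivAt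
  have hud : ∀ r ∈ S, HasDerivAt u (deriv u r) r := by
    intro r hr
    exact ((hu.contDiffAt (hS.mem_nhds hr)).differentiableAt (by simp)).hasDerivAt
  -- the ODE in explicit form
  set P : ℝ → ℝ := fun r =>
    (1 + u r ^ 2) * ((r - ((n : ℝ) - 1) / r) * u r - f r
      - lam * Real.sqrt (1 + u r ^ 2)) with hPdef
  have hP : ∀ r ∈ S, deriv u r = P r := by
    intro r hr
    have h := hode r hr
    have hne : (1 + u r ^ 2) ≠ 0 := (hpos r).ne'
    rw [div_eq_iff hne] at h
    simp only [hPdef]; rw [h]; ring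
  -- positivity of c
  have hc0 : 0 < c := lt_of_le_of_lt ha hc.1
  -- Step 1 : u c ≠ 0
  have huc : u c ≠ 0 := by
    intro hu0c
    have hfceq : f c = -lam := by
      have h := hode c hc
      rw [h2, hu0c] at h
      norm_num [Real.sqrt_one] at h
      linarith
    push_neg at hnc
    obtain ⟨r₀, hr₀S, hr₀⟩ := hnc
    set w : ℝ → ℝ := fun r => (f r + lam)^2 + (u r)^2 with hwdef
    set dw : ℝ → ℝ := fun r => 2*(f r + lam)*(u r) + 2*(u r)*(P r) with hdwdef
    have hwd : ∀ r ∈ S, HasDerivAt w (dw r) r := by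
      intro r hr
      have hd1 := ((hfd r hr).add_const lam).fun_pow 2
      have hd2 := (hud r hr).fun_pow 2
      rw [hP r hr] at hd2
      have := hd1.fun_add hd2
      refine this.congr_deriv ?_
      simp only [hdwdef]
      push_cast
      ring
    have hlc : a < min c r₀ := lt_min hc.1 hr₀S.1
    have hmc : max c r₀ < b := max_lt hc.2 hr₀S.2
    set l := min c r₀ with hldef
    set m := max c r₀ with hmdef
    have hIcc : Icc l m ⊆ S := fun x hx =>
      ⟨lt_of_lt_of_le hlc hx.1, lt_of_le_of_lt hx.2 hmc⟩
    have hl0 : 0 < l := lt_of_le_of_lt ha hlc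
    have hfcont : ContinuousOn (fun r => f r + lam) (Icc l m) :=
      ((hf.continuousOn).mono hIcc).add continuousOn_const
    have hucont : ContinuousOn u (Icc l m) := (hu.continuousOn).mono hIcc
    have hqcont : ContinuousOn (fun r : ℝ => r - ((n:ℝ)-1)/r) (Icc l m) :=
      continuousOn_id.sub (continuousOn_const.div continuousOn_id
        (fun x hx => ne_of_gt (lt_of_lt_of_le hl0 hx.1)))
    obtain ⟨M1, hM1⟩ := (isCompact_Icc : IsCompact (Icc l m)).exists_bound_of_continuousOn hfcont
    obtain ⟨M2, hM2⟩ := (isCompact_Icc : IsCompact (Icc l m)).exists_bound_of_continuousOn hucont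
    obtain ⟨A0, hA0⟩ := (isCompact_Icc : IsCompact (Icc l m)).exists_bound_of_continuousOn hqcont
    set M := max (max M1 M2) 0 with hMdef
    set A := max A0 0 with hAdef
    set K := 1 + (1+M^2)*(1+2*A+2 * |lam| * M) with hKdef
    have hest : ∀ r ∈ Icc l m, |dw r| ≤ K * w r := by
      intro r hr
      have hx : |f r + lam| ≤ M := le_trans
        (by simpa [Real.norm_eq_abs] using hM1 r hr)
        (le_trans (le_max_left M1 M2) (le_max_left _ 0))
      have hy : |u r| ≤ M := le_trans
        (by simpa [Real.norm_eq_abs] using hM2 r hr)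
        (le_trans (le_max_right M1 M2) (le_max_left _ 0))
      have hq : |r - ((n:ℝ)-1)/r| ≤ A := le_trans
        (by simpa [Real.norm_eq_abs] using hA0 r hr) (le_max_left A0 0)
      have key := est_aux (f r + lam) (u r) (r - ((n:ℝ)-1)/r) lam M A hx hy hq
      have hdw_eq : dw r = 2*(f r + lam)*(u r)
          + 2*(u r)*((1+(u r)^2)*((r - ((n:ℝ)-1)/r)*(u r)
            - (f r + lam) - lam*(Real.sqrt (1+(u r)^2) - 1))) := by
        simp only [hdwdef, hPdef]
        ring
      rw [hdw_eq]
      exact key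
    have hzero := gronwall_zero_aux w dw K l m
      (fun r hr => hwd r (hIcc hr))
      (fun r _ => by simp only [hwdef]; positivity)
      hest c ⟨min_le_left c r₀, le_max_left c r₀⟩
      (by simp [hwdef, hfceq, hu0c])
    have hz := hzero r₀ ⟨min_le_right c r₀, le_max_right c r₀⟩
    have hz' : (f r₀ + lam)^2 + (u r₀)^2 = 0 := hz
    have : f r₀ + lam = 0 := by nlinarith [sq_nonneg (f r₀ + lam), sq_nonneg (u r₀)]
    exact hr₀ (by linarith)
  -- Step 2 : compute the third derivative at c
  have h3 : deriv (deriv (deriv f)) c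
      = (1 + u c ^ 2) * (((n : ℝ) - 1) / c ^ 2 * u c) := by
    have hev : deriv u =ᶠ[nhds c] P :=
      Filter.eventuallyEq_of_mem (hS.mem_nhds hc) hP
    have heq : deriv (deriv u) c = deriv P c := hev.deriv_eq
    have hu0 : HasDerivAt u 0 c := by
      have := hud c hc
      rwa [show deriv u c = 0 from h2] at this
    have hfc : HasDerivAt f (u c) c := hfd c hc
    have hA : HasDerivAt (fun r => 1 + u r ^ 2) 0 c := by
      have := (hasDerivAt_const c (1:ℝ)).fun_add (hu0.fun_pow 2)
      simpa using this
    have hsq : HasDerivAt (fun r => Real.sqrt (1 + u r ^ 2)) 0 c := by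
      simpa using hA.sqrt (hpos c).ne'
    have hq : HasDerivAt (fun r : ℝ => r - ((n:ℝ)-1)/r)
        (1 + ((n:ℝ)-1)/c^2) c := by
      have := (hasDerivAt_id c).fun_sub
        ((hasDerivAt_const c (((n:ℝ)-1))).fun_div (hasDerivAt_id c) hc0.ne')
      refine this.congr_deriv ?_
      simp only [id_eq]
      field_simp
      ring
    have hB : HasDerivAt (fun r => (r - ((n:ℝ)-1)/r) * u r - f r
        - lam * Real.sqrt (1 + u r ^ 2))
        ((1 + ((n:ℝ)-1)/c^2) * u c + (c - ((n:ℝ)-1)/c) * 0 - u c - lam * 0) c :=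
      ((hq.mul hu0).sub hfc).sub (hsq.const_mul lam)
    have hPD : HasDerivAt P
        (0 * ((c - ((n:ℝ)-1)/c) * u c - f c - lam * Real.sqrt (1 + u c ^ 2))
          + (1 + u c ^ 2) * ((1 + ((n:ℝ)-1)/c^2) * u c
            + (c - ((n:ℝ)-1)/c) * 0 - u c - lam * 0)) c := hA.mul hB
    have : deriv (deriv (deriv f)) c = deriv P c := heq
    rw [this, hPD.deriv]
    ring
  -- Step 3 : conclude
  rw [h3]
  have hn1 : (0:ℝ) < (n : ℝ) - 1 := by
    have : (2:ℝ) ≤ (n:ℝ) := by exact_mod_cast hn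
    linarith
  have : u c * ((1 + u c ^ 2) * (((n : ℝ) - 1) / c ^ 2 * u c))
      = (1 + u c ^ 2) * (((n : ℝ) - 1) / c ^ 2) * (u c ^ 2) := by ring
  rw [this]
  have h1 : 0 < u c ^ 2 := by positivity
  have h2' : 0 < (1 + u c ^ 2) * (((n : ℝ) - 1) / c ^ 2) := by positivity
  exact mul_pos h2' h1
end

section
/- Let f : (a,b) → ℝ with 0 ≤ a < b be a smooth solution of f''/(1+(f')²) = (r − (n−1)/r)·f' − f − λ·√(1+(f')²), and let c ∈ (a,b). If f'(c)·f''(c) < 0, then f'(r)·f''(r) < 0 for all r ∈ (a, c]. -/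
open Set Filter Topology

theorem stmt_5 (n : ℕ) (hn : 2 ≤ n) (lam : ℝ) (a b : ℝ) (ha : 0 ≤ a) (hab : a < b)
    (f : ℝ → ℝ) (hf : ContDiffOn ℝ (⊤ : ℕ∞) f (Set.Ioo a b))
    (hode : ∀ r ∈ Set.Ioo a b,
      deriv (deriv f) r / (1 + (deriv f r) ^ 2)
        = (r - ((n : ℝ) - 1) / r) * deriv f r - f r
            - lam * Real.sqrt (1 + (deriv f r) ^ 2))
    (c : ℝ) (hc : c ∈ Set.Ioo a b)
    (hsign : deriv f c * deriv (deriv f) c < 0) :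
    ∀ r ∈ Set.Ioc a c, deriv f r * deriv (deriv f) r < 0 := by
  set f1 := deriv f with hf1def
  set f2 := deriv f1 with hf2def
  have hO : IsOpen (Set.Ioo a b) := isOpen_Ioo
  have hCf1 : ContDiffOn ℝ (⊤ : ℕ∞) f1 (Set.Ioo a b) := hf.deriv_of_isOpen hO (by simp)
  have hCf2 : ContDiffOn ℝ (⊤ : ℕ∞) f2 (Set.Ioo a b) := hCf1.deriv_of_isOpen hO (by simp)
  have hdf : ∀ x ∈ Set.Ioo a b, HasDerivAt f (f1 x) x := fun x hx =>
    ((hf.differentiableOn (by simp)).differentiableAt (hO.mem_nhds hx)).hasDerivAt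
  have hdf1 : ∀ x ∈ Set.Ioo a b, HasDerivAt f1 (f2 x) x := fun x hx =>
    ((hCf1.differentiableOn (by simp)).differentiableAt (hO.mem_nhds hx)).hasDerivAt
  have hdf2 : ∀ x ∈ Set.Ioo a b, HasDerivAt f2 (deriv f2 x) x := fun x hx =>
    ((hCf2.differentiableOn (by simp)).differentiableAt (hO.mem_nhds hx)).hasDerivAt
  have hupos : ∀ x : ℝ, (0:ℝ) < 1 + (f1 x)^2 := fun x => by positivity
  set g := fun r => f1 r * f2 r with hgdef
  have hgc : ContinuousOn g (Set.Ioo a b) := (hCf1.continuousOn).mul (hCf2.continuousOn)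
  by_contra hcon
  push_neg at hcon
  obtain ⟨r1, hr1, hg1⟩ := hcon
  have hca : a < c := hc.1
  have hcb : c < b := hc.2
  have hr1c : r1 ≤ c := hr1.2
  set S := {r ∈ Set.Icc r1 c | 0 ≤ g r} with hSdef
  have hSne : S.Nonempty := ⟨r1, ⟨le_refl r1, hr1c⟩, hg1⟩
  have hSbdd : BddAbove S := ⟨c, fun x hx => hx.1.2⟩
  have hIcc1 : Set.Icc r1 c ⊆ Set.Ioo a b := fun x hx =>
    ⟨lt_of_lt_of_le hr1.1 hx.1, lt_of_le_of_lt hx.2 hcb⟩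
  have hSclosed : IsClosed S := by
    have hSeq : S = Set.Icc r1 c ∩ g ⁻¹' Set.Ici 0 := by
      ext x; simp [hSdef, Set.mem_sep_iff, and_comm]
    rw [hSeq]
    exact (hgc.mono hIcc1).preimage_isClosed_of_isClosed isClosed_Icc isClosed_Ici
  set r0 := sSup S with hr0def
  have hr0S : r0 ∈ S := hSclosed.csSup_mem hSne hSbdd
  have hr0le : ∀ x ∈ S, x ≤ r0 := fun x hx => le_csSup hSbdd hx
  have hr0c : r0 ≤ c := hr0S.1.2
  have hr0a : a < r0 := lt_of_lt_of_le hr1.1 hr0S.1.1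
  have hr0b : r0 ∈ Set.Ioo a b := ⟨hr0a, lt_of_le_of_lt hr0c hcb⟩
  have hr0pos : 0 < r0 := lt_of_le_of_lt ha hr0a
  have hneg : ∀ r ∈ Set.Ioc r0 c, g r < 0 := by
    intro r hr
    by_contra hge
    push_neg at hge
    have hrS : r ∈ S := ⟨⟨le_trans hr0S.1.1 hr.1.le, hr.2⟩, hge⟩
    exact absurd (hr0le r hrS) (not_le.mpr hr.1)
  have hr0ltc : r0 < c := by
    rcases lt_or_eq_of_le hr0c with h | h
    · exact h
    · exfalso
      have h2 := hr0S.2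
      rw [h] at h2
      exact absurd hsign (not_lt.mpr h2)
  have hg0 : g r0 = 0 := by
    refine le_antisymm ?_ hr0S.2
    have htend : Filter.Tendsto g (nhdsWithin r0 (Set.Ioi r0)) (nhds (g r0)) :=
      (hgc.continuousAt (hO.mem_nhds hr0b)).tendsto.mono_left nhdsWithin_le_nhds
    refine le_of_tendsto htend ?_
    filter_upwards [Ioc_mem_nhdsGT_of_mem ⟨le_refl r0, hr0ltc⟩] with r hr
    exact (hneg r hr).le
  rcases eq_or_ne (f1 r0) 0 with h10 | hne
  · -- Case 1: f'(r0) = 0; then (f')² is strictly decreasing on [r0, c], contradiction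
    have hIcc2 : Set.Icc r0 c ⊆ Set.Ioo a b := fun x hx =>
      ⟨lt_of_lt_of_le hr0a hx.1, lt_of_le_of_lt hx.2 hcb⟩
    have hanti : StrictAntiOn (fun r => (f1 r)^2) (Set.Icc r0 c) := by
      apply strictAntiOn_of_deriv_neg (convex_Icc r0 c)
      · exact (hCf1.continuousOn.mono hIcc2).pow 2
      · intro x hx
        rw [interior_Icc] at hx
        have hxab : x ∈ Set.Ioo a b := hIcc2 ⟨hx.1.le, hx.2.le⟩
        have hd : HasDerivAt (fun r => (f1 r)^2) (2 * f1 x ^ 1 * f2 x) x :=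
          (hdf1 x hxab).pow 2
        rw [hd.deriv]
        have hlt : f1 x * f2 x < 0 := hneg x ⟨hx.1, hx.2.le⟩
        simp only [pow_one]
        linarith
    have h1 : (f1 c)^2 < (f1 r0)^2 :=
      hanti ⟨le_refl r0, hr0c⟩ ⟨hr0c, le_refl c⟩ hr0ltc
    rw [h10] at h1
    nlinarith [sq_nonneg (f1 c)]
  · -- Case 2: f''(r0) = 0, f'(r0) ≠ 0
    have hf20 : f2 r0 = 0 := by
      have h : f1 r0 * f2 r0 = 0 := hg0
      rcases mul_eq_zero.mp h with h | h
      · exact absurd h hne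
      · exact h
    have hQ0 : (r0 - ((n:ℝ)-1)/r0) * f1 r0 - f r0 - lam * Real.sqrt (1 + (f1 r0)^2) = 0 := by
      have h := hode r0 hr0b
      rw [hf20, zero_div] at h
      exact h.symm
    -- derivative pieces at r0
    have hu : HasDerivAt (fun r => 1 + (f1 r)^2) (2 * f1 r0 ^ 1 * f2 r0) r0 :=
      ((hdf1 r0 hr0b).pow 2).const_add 1
    have hsq : HasDerivAt (fun r => Real.sqrt (1 + (f1 r)^2))
        (1 / (2 * Real.sqrt (1 + (f1 r0)^2)) * (2 * f1 r0 ^ 1 * f2 r0)) r0 :=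
      (Real.hasDerivAt_sqrt (hupos r0).ne').comp r0 hu
    have hw : HasDerivAt (fun r : ℝ => r - ((n:ℝ)-1)/r)
        (1 - (0 * r0 - ((n:ℝ)-1) * 1) / r0^2) r0 :=
      (hasDerivAt_id r0).sub ((hasDerivAt_const r0 ((n:ℝ)-1)).div (hasDerivAt_id r0) hr0pos.ne')
    have hQ' : HasDerivAt
        (fun r => (r - ((n:ℝ)-1)/r) * f1 r - f r - lam * Real.sqrt (1 + (f1 r)^2))
        (((1 - (0 * r0 - ((n:ℝ)-1) * 1) / r0^2) * f1 r0 + (r0 - ((n:ℝ)-1)/r0) * f2 r0)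
          - f1 r0 - lam * (1 / (2 * Real.sqrt (1 + (f1 r0)^2)) * (2 * f1 r0 ^ 1 * f2 r0))) r0 :=
      ((hw.mul (hdf1 r0 hr0b)).sub (hdf r0 hr0b)).sub (hsq.const_mul lam)
    have hRHS : HasDerivAt
        (fun r => (1 + (f1 r)^2) *
          ((r - ((n:ℝ)-1)/r) * f1 r - f r - lam * Real.sqrt (1 + (f1 r)^2)))
        ((2 * f1 r0 ^ 1 * f2 r0) *
            ((r0 - ((n:ℝ)-1)/r0) * f1 r0 - f r0 - lam * Real.sqrt (1 + (f1 r0)^2))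
          + (1 + (f1 r0)^2) *
            (((1 - (0 * r0 - ((n:ℝ)-1) * 1) / r0^2) * f1 r0 + (r0 - ((n:ℝ)-1)/r0) * f2 r0)
              - f1 r0 - lam * (1 / (2 * Real.sqrt (1 + (f1 r0)^2)) * (2 * f1 r0 ^ 1 * f2 r0)))) r0 :=
      hu.mul hQ'
    have hode' : ∀ r ∈ Set.Ioo a b,
        f2 r = (1 + (f1 r)^2) *
          ((r - ((n:ℝ)-1)/r) * f1 r - f r - lam * Real.sqrt (1 + (f1 r)^2)) := by
      intro r hr
      have h := hode r hr
      rw [div_eq_iff (hupos r).ne'] at h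
      rw [h]; ring
    have hEq : f2 =ᶠ[nhds r0] (fun r => (1 + (f1 r)^2) *
        ((r - ((n:ℝ)-1)/r) * f1 r - f r - lam * Real.sqrt (1 + (f1 r)^2))) := by
      filter_upwards [hO.mem_nhds hr0b] with r hr using hode' r hr
    have hval : deriv f2 r0 = (1 + (f1 r0)^2) * ((((n:ℝ)-1)/r0^2) * f1 r0) := by
      rw [hEq.deriv_eq, hRHS.deriv, hf20, hQ0]
      ring
    -- derivative of g at r0 is positive
    have hgd : HasDerivAt g (f2 r0 * f2 r0 + f1 r0 * deriv f2 r0) r0 :=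
      (hdf1 r0 hr0b).mul (hdf2 r0 hr0b)
    have hpos : 0 < f2 r0 * f2 r0 + f1 r0 * deriv f2 r0 := by
      rw [hf20, hval]
      have h1 : (0:ℝ) < 1 + (f1 r0)^2 := hupos r0
      have h2 : (0:ℝ) < (n:ℝ) - 1 := by
        have : (2:ℝ) ≤ (n:ℝ) := by exact_mod_cast hn
        linarith
      have h3 : (0:ℝ) < r0^2 := by positivity
      have h5 : (0:ℝ) < ((n:ℝ)-1)/r0^2 := div_pos h2 h3
      have h4 : (0:ℝ) < f1 r0 * f1 r0 := mul_self_pos.mpr hne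
      nlinarith [mul_pos h1 (mul_pos h5 h4)]
    -- slope argument: g positive just to the right of r0, contradiction
    have hslope : Tendsto (slope g r0) (𝓝[≠] r0) (𝓝 (f2 r0 * f2 r0 + f1 r0 * deriv f2 r0)) :=
      hasDerivAt_iff_tendsto_slope.mp hgd
    have hslope' : Tendsto (slope g r0) (𝓝[>] r0) (𝓝 (f2 r0 * f2 r0 + f1 r0 * deriv f2 r0)) :=
      hslope.mono_left (nhdsWithin_mono r0 (fun x hx => ne_of_gt hx))
    have hev : ∀ᶠ r in 𝓝[>] r0, 0 < slope g r0 r :=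
      hslope'.eventually (eventually_gt_nhds hpos)
    have hev2 : ∀ᶠ r in 𝓝[>] r0, r ∈ Set.Ioc r0 c :=
      Filter.eventually_of_mem (Ioc_mem_nhdsGT_of_mem ⟨le_refl r0, hr0ltc⟩) fun r hr => hr
    obtain ⟨r, hrslope, hrmem⟩ := (hev.and hev2).exists
    have hgr : g r < 0 := hneg r hrmem
    rw [slope_def_field, hg0, sub_zero] at hrslope
    rcases div_pos_iff.mp hrslope with ⟨h1, _⟩ | ⟨_, h2⟩
    · exact absurd hgr (not_lt.mpr h1.le)
    · exact absurd h2 (not_lt.mpr (sub_nonneg.mpr hrmem.1.le))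
end

section
/- Let f : (a,b) → ℝ with 0 ≤ a < b be a smooth solution of f''/(1+(f')²) = (r − (n−1)/r)·f' − f − λ·√(1+(f')²), and let c ∈ (a,b). If f'(c)·f''(c) > 0, then f'(r)·f''(r) > 0 for all r ∈ [c, b). -/
open Topology

theorem stmt_6 (n : ℕ) (hn : 2 ≤ n) (lam : ℝ) (a b : ℝ) (ha : 0 ≤ a) (hab : a < b)
    (f : ℝ → ℝ) (hf : ContDiffOn ℝ (⊤ : ℕ∞) f (Set.Ioo a b))
    (hode : ∀ r ∈ Set.Ioo a b,
      deriv (deriv f) r / (1 + (deriv f r) ^ 2)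
        = (r - ((n : ℝ) - 1) / r) * deriv f r - f r
            - lam * Real.sqrt (1 + (deriv f r) ^ 2))
    (c : ℝ) (hc : c ∈ Set.Ioo a b)
    (hsign : 0 < deriv f c * deriv (deriv f) c) :
    ∀ r ∈ Set.Ico c b, 0 < deriv f r * deriv (deriv f) r := by
  set S := Set.Ioo a b with hSdef
  have hSo : IsOpen S := isOpen_Ioo
  set u := deriv f with hu_def
  set h := deriv u with hh_def
  have hf' : ContDiffOn ℝ (⊤ : ℕ∞) f S := hf.of_le (by simp)
  have hu : ContDiffOn ℝ (⊤ : ℕ∞) u S := hf'.deriv_of_isOpen hSo (by simp)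
  have hh : ContDiffOn ℝ (⊤ : ℕ∞) h S := hu.deriv_of_isOpen hSo (by simp)
  have hfd : DifferentiableOn ℝ f S := hf'.differentiableOn (by simp)
  have hud : DifferentiableOn ℝ u S := hu.differentiableOn (by simp)
  have hhd : DifferentiableOn ℝ h S := hh.differentiableOn (by simp)
  set g : ℝ → ℝ := fun r => u r * h r with hg_def
  have hgc : ContinuousOn g S := (hud.continuousOn.mul hhd.continuousOn)
  -- pointwise derivatives
  have hfdAt : ∀ x ∈ S, HasDerivAt f (u x) x := fun x hx =>
    ((hfd x hx).differentiableAt (hSo.mem_nhds hx)).hasDerivAt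
  have hudAt : ∀ x ∈ S, HasDerivAt u (h x) x := fun x hx =>
    ((hud x hx).differentiableAt (hSo.mem_nhds hx)).hasDerivAt
  have hhdAt : ∀ x ∈ S, DifferentiableAt ℝ h x := fun x hx =>
    (hhd x hx).differentiableAt (hSo.mem_nhds hx)
  -- the ODE rewritten
  have hq_pos : ∀ x : ℝ, (0:ℝ) < 1 + u x ^ 2 := fun x => by positivity
  have hFeq : ∀ x ∈ S, h x =
      ((x - ((n : ℝ) - 1) / x) * u x - f x - lam * Real.sqrt (1 + u x ^ 2)) * (1 + u x ^ 2) := by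
    intro x hx
    have := hode x hx
    rw [div_eq_iff (ne_of_gt (hq_pos x))] at this
    exact this
  -- main argument
  intro r hr
  by_contra hcon
  push_neg at hcon
  -- the set of failure points
  set E : Set ℝ := Set.Icc c r ∩ g ⁻¹' Set.Iic 0 with hEdef
  have hacb : a < c := hc.1
  have hcb : c < b := hc.2
  have hrb : r < b := hr.2
  have hcr : c ≤ r := hr.1
  have hIccS : Set.Icc c r ⊆ S := fun x hx => ⟨lt_of_lt_of_le hacb hx.1, lt_of_le_of_lt hx.2 hrb⟩
  have hEclosed : IsClosed E :=
    (hgc.mono hIccS).preimage_isClosed_of_isClosed isClosed_Icc isClosed_Iic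
  have hEne : E.Nonempty := ⟨r, ⟨hcr, le_refl r⟩, hcon⟩
  have hEbdd : BddBelow E := ⟨c, fun x hx => hx.1.1⟩
  set r₀ := sInf E with hr₀def
  have hr₀E : r₀ ∈ E := hEclosed.csInf_mem hEne hEbdd
  have hcr₀ : c ≤ r₀ := hr₀E.1.1
  have hr₀r : r₀ ≤ r := hr₀E.1.2
  have hgr₀ : g r₀ ≤ 0 := hr₀E.2
  have hr₀S : r₀ ∈ S := hIccS ⟨hcr₀, hr₀r⟩
  have hgc0 : 0 < g c := hsign
  have hcltr₀ : c < r₀ := by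
    rcases lt_or_eq_of_le hcr₀ with h1 | h1
    · exact h1
    · exfalso; rw [← h1] at hgr₀; linarith
  have hr₀pos : 0 < r₀ := lt_of_le_of_lt ha (lt_trans hacb hcltr₀)
  -- g > 0 on [c, r₀)
  have hgpos : ∀ x ∈ Set.Ico c r₀, 0 < g x := by
    intro x hx
    by_contra hgx
    push_neg at hgx
    have hxE : x ∈ E := ⟨⟨hx.1, le_trans (le_of_lt hx.2) hr₀r⟩, hgx⟩
    exact absurd (csInf_le hEbdd hxE) (not_le.mpr hx.2)
  -- g r₀ = 0 by left continuity
  have hgr₀0 : g r₀ = 0 := by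
    have hne : (𝓝[<] r₀).NeBot := nhdsLT_neBot r₀
    have htend : Filter.Tendsto g (𝓝[<] r₀) (𝓝 (g r₀)) :=
      ((hgc.continuousAt (hSo.mem_nhds hr₀S)).continuousWithinAt)
    have hev : ∀ᶠ x in 𝓝[<] r₀, 0 ≤ g x := by
      filter_upwards [Ioo_mem_nhdsLT_of_mem (show r₀ ∈ Set.Ioc c r₀ from ⟨hcltr₀, le_refl _⟩)]
        with x hx
      exact le_of_lt (hgpos x ⟨le_of_lt hx.1, hx.2⟩)
    have := ge_of_tendsto htend hev
    linarith
  -- u r₀ ≠ 0 via strict monotonicity of u^2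
  have hIccS' : Set.Icc c r₀ ⊆ S := fun x hx =>
    hIccS ⟨hx.1, le_trans hx.2 hr₀r⟩
  have hu2mono : StrictMonoOn (fun x => u x ^ 2) (Set.Icc c r₀) := by
    apply strictMonoOn_of_deriv_pos (convex_Icc c r₀)
    · exact ((hud.continuousOn.mono hIccS').pow 2)
    · intro x hx
      rw [interior_Icc] at hx
      have hxS : x ∈ S := hIccS' ⟨le_of_lt hx.1, le_of_lt hx.2⟩
      have hder : deriv (fun y => u y ^ 2) x = 2 * u x ^ 1 * h x :=
        HasDerivAt.deriv (by exact_mod_cast (hudAt x hxS).pow 2)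
      rw [hder]
      have hgx : 0 < g x := hgpos x ⟨le_of_lt hx.1, hx.2⟩
      have : (2:ℝ) * u x ^ 1 * h x = 2 * (u x * h x) := by ring
      rw [this]; simp only [hg_def] at hgx; linarith
  have hur₀ : u r₀ ≠ 0 := by
    have huc : u c ≠ 0 := by
      intro hz; rw [hg_def] at hgc0; simp only [hz, zero_mul] at hgc0; linarith
    have := hu2mono ⟨le_refl c, le_of_lt hcltr₀⟩ ⟨le_of_lt hcltr₀, le_refl r₀⟩ hcltr₀
    intro hz
    have h2 : u c ^ 2 < u r₀ ^ 2 := this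
    rw [hz] at h2
    nlinarith [sq_nonneg (u c)]
  have hhr₀ : h r₀ = 0 := by
    rw [hg_def] at hgr₀0
    rcases mul_eq_zero.mp hgr₀0 with h1 | h1
    · exact absurd h1 hur₀
    · exact h1
  -- compute derivative of g at r₀
  have hr₀ne : r₀ ≠ 0 := ne_of_gt hr₀pos
  have huaAt : HasDerivAt u 0 r₀ := by
    have := hudAt r₀ hr₀S; rwa [hhr₀] at this
  have hfaAt : HasDerivAt f (u r₀) r₀ := hfdAt r₀ hr₀S
  have hA : HasDerivAt (fun x : ℝ => x - ((n : ℝ) - 1) / x)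
      (1 - (0 * r₀ - ((n : ℝ) - 1) * 1) / r₀ ^ 2) r₀ :=
    (hasDerivAt_id r₀).sub ((hasDerivAt_const r₀ ((n:ℝ)-1)).div (hasDerivAt_id r₀) hr₀ne)
  have hqA : HasDerivAt (fun x => 1 + u x ^ 2) (0 + 2 * u r₀ ^ 1 * 0) r₀ :=
    (hasDerivAt_const r₀ (1:ℝ)).add (by exact_mod_cast huaAt.pow 2)
  have hsq_ne : (1 + u r₀ ^ 2) ≠ 0 := ne_of_gt (hq_pos r₀)
  have hsqrt : HasDerivAt (fun x => Real.sqrt (1 + u x ^ 2))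
      ((0 + 2 * u r₀ ^ 1 * 0) / (2 * Real.sqrt (1 + u r₀ ^ 2))) r₀ := hqA.sqrt hsq_ne
  have hinner : HasDerivAt
      (fun x => (x - ((n : ℝ) - 1) / x) * u x - f x - lam * Real.sqrt (1 + u x ^ 2))
      (((1 - (0 * r₀ - ((n : ℝ) - 1) * 1) / r₀ ^ 2) * u r₀
          + (r₀ - ((n : ℝ) - 1) / r₀) * 0) - u r₀
        - lam * ((0 + 2 * u r₀ ^ 1 * 0) / (2 * Real.sqrt (1 + u r₀ ^ 2)))) r₀ :=
    ((hA.mul huaAt).sub hfaAt).sub (hsqrt.const_mul lam)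
  have hFA : HasDerivAt
      (fun x => ((x - ((n : ℝ) - 1) / x) * u x - f x - lam * Real.sqrt (1 + u x ^ 2))
        * (1 + u x ^ 2))
      ((((1 - (0 * r₀ - ((n : ℝ) - 1) * 1) / r₀ ^ 2) * u r₀
          + (r₀ - ((n : ℝ) - 1) / r₀) * 0) - u r₀
        - lam * ((0 + 2 * u r₀ ^ 1 * 0) / (2 * Real.sqrt (1 + u r₀ ^ 2))))
          * (1 + u r₀ ^ 2)
        + ((r₀ - ((n : ℝ) - 1) / r₀) * u r₀ - f r₀ - lam * Real.sqrt (1 + u r₀ ^ 2))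
          * (0 + 2 * u r₀ ^ 1 * 0)) r₀ := hinner.mul hqA
  have hEq : h =ᶠ[𝓝 r₀]
      (fun x => ((x - ((n : ℝ) - 1) / x) * u x - f x - lam * Real.sqrt (1 + u x ^ 2))
        * (1 + u x ^ 2)) :=
    Filter.eventuallyEq_of_mem (hSo.mem_nhds hr₀S) hFeq
  have hhAt : HasDerivAt h
      ((((1 - (0 * r₀ - ((n : ℝ) - 1) * 1) / r₀ ^ 2) * u r₀
          + (r₀ - ((n : ℝ) - 1) / r₀) * 0) - u r₀
        - lam * ((0 + 2 * u r₀ ^ 1 * 0) / (2 * Real.sqrt (1 + u r₀ ^ 2))))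
          * (1 + u r₀ ^ 2)
        + ((r₀ - ((n : ℝ) - 1) / r₀) * u r₀ - f r₀ - lam * Real.sqrt (1 + u r₀ ^ 2))
          * (0 + 2 * u r₀ ^ 1 * 0)) r₀ := hFA.congr_of_eventuallyEq hEq
  -- the value of the derivative of g at r₀
  set D : ℝ := u r₀ ^ 2 * (1 + u r₀ ^ 2) * ((n:ℝ) - 1) / r₀ ^ 2 with hDdef
  have hDpos : 0 < D := by
    have hn1 : (0:ℝ) < (n:ℝ) - 1 := by
      have : (2:ℝ) ≤ (n:ℝ) := by exact_mod_cast hn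
      linarith
    have hu2 : 0 < u r₀ ^ 2 := by positivity
    have := hq_pos r₀
    positivity
  have hgAt : HasDerivAt g D r₀ := by
    have := huaAt.mul hhAt
    refine this.congr_deriv ?_
    simp only [hDdef]
    field_simp
    ring
  -- contradiction via the slope from the left
  have hslope := hasDerivAt_iff_tendsto_slope.mp hgAt
  have hslope_ev : ∀ᶠ x in 𝓝[≠] r₀, 0 < slope g r₀ x :=
    hslope.eventually (eventually_gt_nhds hDpos)
  have hmem : Set.Ioo c r₀ ∈ 𝓝[<] r₀ :=
    Ioo_mem_nhdsLT_of_mem ⟨hcltr₀, le_refl r₀⟩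
  have hle : 𝓝[<] r₀ ≤ 𝓝[≠] r₀ :=
    nhdsWithin_mono r₀ (fun x hx => ne_of_lt hx)
  have hslope_ev' : ∀ᶠ x in 𝓝[<] r₀, 0 < slope g r₀ x := hle hslope_ev
  have hne : (𝓝[<] r₀).NeBot := nhdsLT_neBot r₀
  obtain ⟨x, hx1, hx2⟩ := (hslope_ev'.and (Filter.eventually_of_mem hmem fun y hy => hy)).exists
  have hxr₀ : x < r₀ := hx2.2
  have hgx : 0 < g x := hgpos x ⟨le_of_lt hx2.1, hxr₀⟩
  rw [slope_def_field, hgr₀0, sub_zero] at hx1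
  have hden : x - r₀ < 0 := by linarith
  have : g x < 0 := by
    have := div_pos_iff.mp hx1
    rcases this with ⟨h1, h2⟩ | ⟨h1, h2⟩
    · linarith
    · linarith
  linarith
end

section
/- Let f : (a,b) → ℝ with 0 ≤ a < b be a smooth non-constant solution of f''/(1+(f')²) = (r − (n−1)/r)·f' − f − λ·√(1+(f')²). If f'(c) = 0 for some c ∈ (a,b), then either f''(r) > 0 for all r ∈ (a,b), or f''(r) < 0 for all r ∈ (a,b). -/
open Set

lemma deriv_nonneg_right' {g : ℝ → ℝ} {d s t : ℝ} (hg : HasDerivAt g d s) (hst : s < t)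
    (h : ∀ r ∈ Set.Ioo s t, g s ≤ g r) : 0 ≤ d := by
  have hw := (hg.hasDerivWithinAt (s := Set.Ioi s))
  rw [hasDerivWithinAt_iff_tendsto_slope] at hw
  have hd : Set.Ioi s \ {s} = Set.Ioi s := Set.diff_singleton_eq_self (by simp)
  rw [hd] at hw
  refine ge_of_tendsto hw ?_
  filter_upwards [Ioo_mem_nhdsGT_of_mem ⟨le_refl s, hst⟩] with r hr
  rw [slope_def_field]
  exact div_nonneg (sub_nonneg.2 (h r hr)) (le_of_lt (sub_pos.2 hr.1))

lemma deriv_nonpos_left' {g : ℝ → ℝ} {d s t : ℝ} (hg : HasDerivAt g d s) (hts : t < s)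
    (h : ∀ r ∈ Set.Ioo t s, g s ≤ g r) : d ≤ 0 := by
  have hw := (hg.hasDerivWithinAt (s := Set.Iio s))
  rw [hasDerivWithinAt_iff_tendsto_slope] at hw
  have hd : Set.Iio s \ {s} = Set.Iio s := Set.diff_singleton_eq_self (by simp)
  rw [hd] at hw
  refine le_of_tendsto hw ?_
  filter_upwards [Ioo_mem_nhdsLT_of_mem ⟨hts, le_refl s⟩] with r hr
  rw [slope_def_field]
  exact div_nonpos_of_nonneg_of_nonpos (sub_nonneg.2 (h r hr)) (le_of_lt (sub_neg.2 hr.2))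

lemma deriv_nonpos_right' {g : ℝ → ℝ} {d s t : ℝ} (hg : HasDerivAt g d s) (hst : s < t)
    (h : ∀ r ∈ Set.Ioo s t, g r ≤ g s) : d ≤ 0 := by
  have := deriv_nonneg_right' hg.neg hst (fun r hr => neg_le_neg (h r hr))
  linarith

lemma third_deriv_eq (n : ℕ) (lam a b : ℝ) (ha : 0 ≤ a) (f : ℝ → ℝ)
    (hf : ContDiffOn ℝ (⊤ : ℕ∞) f (Set.Ioo a b))
    (hE : ∀ r ∈ Set.Ioo a b, deriv (deriv f) r
        = (1 + (deriv f r)^2) * ((r - ((n:ℝ)-1)/r) * deriv f r - f r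
            - lam * Real.sqrt (1 + (deriv f r)^2)))
    (s : ℝ) (hs : s ∈ Set.Ioo a b) (hws : deriv (deriv f) s = 0) :
    deriv (deriv (deriv f)) s
      = (1 + (deriv f s)^2) * (((n:ℝ)-1)/s^2) * deriv f s := by
  have hs0 : (0:ℝ) < s := lt_of_le_of_lt ha hs.1
  have hu : HasDerivAt f (deriv f s) s :=
    ((hf.differentiableOn (by simp)).differentiableAt (isOpen_Ioo.mem_nhds hs)).hasDerivAt
  have hf1 : ContDiffOn ℝ (⊤ : ℕ∞) (deriv f) (Set.Ioo a b) := hf.deriv_of_isOpen isOpen_Ioo (by simp)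
  have hdu : HasDerivAt (deriv f) (deriv (deriv f) s) s :=
    ((hf1.differentiableOn (by simp)).differentiableAt (isOpen_Ioo.mem_nhds hs)).hasDerivAt
  set u := deriv f s with hu_def
  set w := deriv (deriv f) s with hw_def
  have hpos : (0:ℝ) < 1 + u^2 := by positivity
  have hsq : HasDerivAt (fun r => 1 + (deriv f r)^2) (2*u*w) s := by
    have := (hdu.pow 2).const_add (1:ℝ)
    refine this.congr_deriv ?_
    push_cast; ring
  have hsqrt : HasDerivAt (fun r => Real.sqrt (1 + (deriv f r)^2))
      (2*u*w / (2 * Real.sqrt (1 + u^2))) s :=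
    hsq.sqrt (by positivity)
  have hinv : HasDerivAt (fun r : ℝ => ((n:ℝ)-1)/r) (-(((n:ℝ)-1)/s^2)) s := by
    have h2 := (hasDerivAt_inv (ne_of_gt hs0)).const_mul ((n:ℝ)-1)
    rw [show (fun r : ℝ => ((n:ℝ)-1)/r) = fun y : ℝ => ((n:ℝ)-1) * y⁻¹ from
      funext fun y => div_eq_mul_inv _ _]
    refine h2.congr_deriv ?_
    field_simp
  have hlin : HasDerivAt (fun r : ℝ => r - ((n:ℝ)-1)/r) (1 + ((n:ℝ)-1)/s^2) s := by
    have := (hasDerivAt_id s).sub hinv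
    refine this.congr_deriv ?_
    ring
  have hG2 : HasDerivAt (fun r => (r - ((n:ℝ)-1)/r) * deriv f r - f r
      - lam * Real.sqrt (1 + (deriv f r)^2))
      ((1 + ((n:ℝ)-1)/s^2) * u + (s - ((n:ℝ)-1)/s) * w - u
        - lam * (2*u*w / (2 * Real.sqrt (1 + u^2)))) s :=
    ((hlin.mul hdu).sub hu).sub (hsqrt.const_mul lam)
  have hG : HasDerivAt (fun r => (1 + (deriv f r)^2) * ((r - ((n:ℝ)-1)/r) * deriv f r - f r
      - lam * Real.sqrt (1 + (deriv f r)^2)))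
      (2*u*w * ((s - ((n:ℝ)-1)/s) * u - f s - lam * Real.sqrt (1 + u^2))
        + (1 + u^2) * ((1 + ((n:ℝ)-1)/s^2) * u + (s - ((n:ℝ)-1)/s) * w - u
          - lam * (2*u*w / (2 * Real.sqrt (1 + u^2))))) s := hsq.mul hG2
  have heq : deriv (deriv f) =ᶠ[nhds s] (fun r => (1 + (deriv f r)^2)
      * ((r - ((n:ℝ)-1)/r) * deriv f r - f r - lam * Real.sqrt (1 + (deriv f r)^2))) := by
    filter_upwards [isOpen_Ioo.mem_nhds hs] with r hr using hE r hr
  calc deriv (deriv (deriv f)) s = _ := heq.deriv_eq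
    _ = _ := hG.deriv
    _ = (1 + u^2) * (((n:ℝ)-1)/s^2) * u := by rw [hws]; ring

lemma unique_const (n : ℕ) (lam a b : ℝ) (ha : 0 ≤ a) (f : ℝ → ℝ)
    (hf : ContDiffOn ℝ (⊤ : ℕ∞) f (Set.Ioo a b))
    (hE : ∀ r ∈ Set.Ioo a b, deriv (deriv f) r
        = (1 + (deriv f r)^2) * ((r - ((n:ℝ)-1)/r) * deriv f r - f r
            - lam * Real.sqrt (1 + (deriv f r)^2)))
    (r₀ : ℝ) (hr₀ : r₀ ∈ Set.Ioo a b) (h0 : f r₀ = -lam) (h1 : deriv f r₀ = 0) :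
    ∀ q ∈ Set.Ioo a b, f q = -lam := by
  intro q hq
  have hf1 : ContDiffOn ℝ (⊤ : ℕ∞) (deriv f) (Set.Ioo a b) := hf.deriv_of_isOpen isOpen_Ioo (by simp)
  set l : ℝ := (a + min r₀ q) / 2 with hl_def
  set rr : ℝ := (max r₀ q + b) / 2 with hrr_def
  have hminq : a < min r₀ q := lt_min hr₀.1 hq.1
  have hmaxq : max r₀ q < b := max_lt hr₀.2 hq.2
  have hal : a < l := by rw [hl_def]; linarith
  have hlm : l < min r₀ q := by rw [hl_def]; linarith
  have hmr : max r₀ q < rr := by rw [hrr_def]; linarith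
  have hrb : rr < b := by rw [hrr_def]; linarith
  have hl0 : (0:ℝ) < l := lt_of_le_of_lt ha hal
  have hlr : l < rr := lt_trans (lt_of_lt_of_le hlm (min_le_max)) hmr
  have hIcc : Set.Icc l rr ⊆ Set.Ioo a b :=
    fun x hx => ⟨lt_of_lt_of_le hal hx.1, lt_of_le_of_lt hx.2 hrb⟩
  have hr₀' : r₀ ∈ Set.Ioo l rr :=
    ⟨lt_of_lt_of_le hlm (min_le_left _ _), lt_of_le_of_lt (le_max_left _ _) hmr⟩
  have hq' : q ∈ Set.Ioo l rr :=
    ⟨lt_of_lt_of_le hlm (min_le_right _ _), lt_of_le_of_lt (le_max_right _ _) hmr⟩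
  -- the curve
  set α : ℝ → ℝ × ℝ := fun t => (f t, deriv f t) with hα_def
  have hαcont : ContinuousOn α (Set.Icc l rr) :=
    ((hf.continuousOn).mono hIcc).prodMk ((hf1.continuousOn).mono hIcc)
  obtain ⟨C, hC⟩ := isCompact_Icc.exists_bound_of_continuousOn hαcont
  set R : ℝ := max C ‖((-lam : ℝ), (0:ℝ))‖ + 1 with hR_def
  have hαmem : ∀ t ∈ Set.Icc l rr, α t ∈ Metric.closedBall (0 : ℝ × ℝ) R := by
    intro t ht
    rw [Metric.mem_closedBall, dist_zero_right]
    have := hC t ht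
    have h2 : C ≤ R := by rw [hR_def]; have := le_max_left C ‖((-lam : ℝ), (0:ℝ))‖; linarith
    linarith
  have hconstmem : ((-lam : ℝ), (0:ℝ)) ∈ Metric.closedBall (0 : ℝ × ℝ) R := by
    rw [Metric.mem_closedBall, dist_zero_right]
    have := le_max_right C ‖((-lam : ℝ), (0:ℝ))‖
    rw [hR_def]; linarith
  -- the joint vector field
  set Wj : ℝ × (ℝ × ℝ) → ℝ × ℝ := fun p =>
    (p.2.2, (1 + p.2.2^2) * ((p.1 - ((n:ℝ)-1)/p.1) * p.2.2 - p.2.1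
      - lam * Real.sqrt (1 + p.2.2^2))) with hWj_def
  set O : Set (ℝ × (ℝ × ℝ)) := {p | 0 < p.1} with hO_def
  have hO : IsOpen O := isOpen_lt continuous_const continuous_fst
  have hWj : ContDiffOn ℝ 1 Wj O := by
    intro p hp
    have hp1 : (0:ℝ) < p.1 := hp
    have h_t : ContDiffAt ℝ 1 (fun p : ℝ × (ℝ × ℝ) => p.1) p := contDiff_fst.contDiffAt
    have h_y : ContDiffAt ℝ 1 (fun p : ℝ × (ℝ × ℝ) => p.2.1) p :=
      (contDiff_fst.comp contDiff_snd).contDiffAt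
    have h_z : ContDiffAt ℝ 1 (fun p : ℝ × (ℝ × ℝ) => p.2.2) p :=
      (contDiff_snd.comp contDiff_snd).contDiffAt
    have h_one : ContDiffAt ℝ 1 (fun p : ℝ × (ℝ × ℝ) => 1 + p.2.2^2) p :=
      contDiffAt_const.add (h_z.pow 2)
    have h_sqrt : ContDiffAt ℝ 1 (fun p : ℝ × (ℝ × ℝ) => Real.sqrt (1 + p.2.2^2)) p :=
      (Real.contDiffAt_sqrt (by positivity)).comp p h_one
    have h_div : ContDiffAt ℝ 1 (fun p : ℝ × (ℝ × ℝ) => ((n:ℝ)-1)/p.1) p :=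
      contDiffAt_const.div h_t (ne_of_gt hp1)
    exact (h_z.prodMk (h_one.mul ((((h_t.sub h_div).mul h_z).sub h_y).sub
      (h_sqrt.const_smul lam)))).contDiffWithinAt
  -- Lipschitz bound on a compact convex product
  set D : Set (ℝ × (ℝ × ℝ)) := Set.Icc l rr ×ˢ Metric.closedBall (0 : ℝ × ℝ) R with hD_def
  have hDO : D ⊆ O := fun p hp => lt_of_lt_of_le hl0 hp.1.1
  have hDcompact : IsCompact D := isCompact_Icc.prod (isCompact_closedBall _ _)
  have hDconvex : Convex ℝ D := (convex_Icc _ _).prod (convex_closedBall _ _)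
  have hfderiv_cont : ContinuousOn (fderiv ℝ Wj) O :=
    hWj.continuousOn_fderiv_of_isOpen hO le_rfl
  obtain ⟨M, hM⟩ := hDcompact.exists_bound_of_continuousOn (hfderiv_cont.mono hDO)
  set K : NNReal := ⟨max M 0, le_max_right _ _⟩ with hK_def
  have hlip : LipschitzOnWith K Wj D := by
    refine hDconvex.lipschitzOnWith_of_nnnorm_fderiv_le
      (fun x hx => (hWj.contDiffAt (hO.mem_nhds (hDO hx))).differentiableAt one_ne_zero) ?_
    intro x hx
    rw [← NNReal.coe_le_coe, coe_nnnorm]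
    exact le_trans (hM x hx) (le_max_left _ _)
  -- the clamped vector field
  set clamp : ℝ → ℝ := fun t => min (max t l) rr with hclamp_def
  have hclamp_mem : ∀ t, clamp t ∈ Set.Icc l rr :=
    fun t => ⟨le_min (le_max_right _ _) hlr.le, min_le_right _ _⟩
  have hclamp_id : ∀ t ∈ Set.Icc l rr, clamp t = t := by
    intro t ht
    rw [hclamp_def]
    simp only [max_eq_left ht.1, min_eq_left ht.2]
  set v : ℝ → ℝ × ℝ → ℝ × ℝ := fun t p => Wj (clamp t, p) with hv_def
  have hv : ∀ t, LipschitzOnWith K (v t) (Metric.closedBall (0 : ℝ × ℝ) R) := by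
    intro t x hx y hy
    have h1 := hlip (Set.mk_mem_prod (hclamp_mem t) hx) (Set.mk_mem_prod (hclamp_mem t) hy)
    calc edist (v t x) (v t y) = edist (Wj (clamp t, x)) (Wj (clamp t, y)) := rfl
      _ ≤ K * edist ((clamp t, x) : ℝ × (ℝ × ℝ)) (clamp t, y) := h1
      _ = K * edist x y := by rw [Prod.edist_eq, edist_self, max_eq_right zero_le]
  -- ODE uniqueness
  have happ := ODE_solution_unique_of_mem_Ioo (v := v)
    (s := fun _ => Metric.closedBall (0 : ℝ × ℝ) R) (K := K) (fun t _ => hv t)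
    (t₀ := r₀) (f := α) (g := fun _ => ((-lam : ℝ), (0:ℝ))) hr₀' ?_ ?_ ?_
  · have := happ hq'
    have h2 : f q = -lam := congrArg Prod.fst this
    exact h2
  · -- the curve solves the ODE
    intro t ht
    have htab : t ∈ Set.Ioo a b := hIcc (Set.Ioo_subset_Icc_self ht)
    refine ⟨?_, hαmem t (Set.Ioo_subset_Icc_self ht)⟩
    have hct : clamp t = t := hclamp_id t (Set.Ioo_subset_Icc_self ht)
    have hv_eq : v t (α t) = (deriv f t, deriv (deriv f) t) := by
      show (deriv f t, (1 + (deriv f t)^2) * ((clamp t - ((n:ℝ)-1)/(clamp t)) * deriv f t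
        - f t - lam * Real.sqrt (1 + (deriv f t)^2))) = _
      rw [hct, ← hE t htab]
    rw [hv_eq]
    exact HasDerivAt.prodMk
      (((hf.differentiableOn (by simp)).differentiableAt (isOpen_Ioo.mem_nhds htab)).hasDerivAt)
      (((hf1.differentiableOn (by simp)).differentiableAt (isOpen_Ioo.mem_nhds htab)).hasDerivAt)
  · -- the constant solves the ODE
    intro t ht
    refine ⟨?_, hconstmem⟩
    have hv_eq : v t ((-lam : ℝ), (0:ℝ)) = (0, 0) := by
      show ((0:ℝ), (1 + (0:ℝ)^2) * ((clamp t - ((n:ℝ)-1)/(clamp t)) * 0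
        - (-lam) - lam * Real.sqrt (1 + (0:ℝ)^2))) = _
      norm_num
    rw [hv_eq]
    exact hasDerivAt_const _ _
  · show α r₀ = _
    rw [hα_def]
    simp only [h0, h1]

lemma pos_case (n : ℕ) (hn : 2 ≤ n) (lam a b : ℝ) (ha : 0 ≤ a) (f : ℝ → ℝ)
    (hf : ContDiffOn ℝ (⊤ : ℕ∞) f (Set.Ioo a b))
    (hE : ∀ r ∈ Set.Ioo a b, deriv (deriv f) r
        = (1 + (deriv f r)^2) * ((r - ((n:ℝ)-1)/r) * deriv f r - f r
            - lam * Real.sqrt (1 + (deriv f r)^2)))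
    (hnc : ¬ ∀ r ∈ Set.Ioo a b, f r = -lam)
    (c : ℝ) (hc : c ∈ Set.Ioo a b) (h1 : deriv f c = 0)
    (r₀ : ℝ) (hr₀ : r₀ ∈ Set.Ioo a b) (hw0 : deriv (deriv f) r₀ = 0)
    (hu0 : 0 < deriv f r₀) : False := by
  have hf1 : ContDiffOn ℝ (⊤ : ℕ∞) (deriv f) (Set.Ioo a b) := hf.deriv_of_isOpen isOpen_Ioo (by simp)
  have hf2 : ContDiffOn ℝ (⊤ : ℕ∞) (deriv (deriv f)) (Set.Ioo a b) :=
    hf1.deriv_of_isOpen isOpen_Ioo (by simp)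
  have hucont : ContinuousOn (deriv f) (Set.Ioo a b) := hf1.continuousOn
  have hwcont : ContinuousOn (deriv (deriv f)) (Set.Ioo a b) := hf2.continuousOn
  have hdu : ∀ r ∈ Set.Ioo a b, HasDerivAt (deriv f) (deriv (deriv f) r) r := fun r hr =>
    ((hf1.differentiableOn (by simp)).differentiableAt (isOpen_Ioo.mem_nhds hr)).hasDerivAt
  have hdw : ∀ r ∈ Set.Ioo a b, HasDerivAt (deriv (deriv f)) (deriv (deriv (deriv f)) r) r :=
    fun r hr =>
    ((hf2.differentiableOn (by simp)).differentiableAt (isOpen_Ioo.mem_nhds hr)).hasDerivAt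
  -- a critical point with vanishing second derivative is impossible
  have critzero : ∀ z ∈ Set.Ioo a b, deriv f z = 0 → deriv (deriv f) z = 0 → False := by
    intro z hz huz hwz
    have h := hE z hz
    rw [huz, hwz] at h
    norm_num [Real.sqrt_one] at h
    have hfz : f z = -lam := by linarith
    exact hnc (unique_const n lam a b ha f hf hE z hz hfz huz)
  -- positivity of the third derivative at a zero of the second with positive first
  have third_pos : ∀ s ∈ Set.Ioo a b, deriv (deriv f) s = 0 → 0 < deriv f s →
      0 < deriv (deriv (deriv f)) s := by
    intro s hs hws hus
    rw [third_deriv_eq n lam a b ha f hf hE s hs hws]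
    have hs0 : (0:ℝ) < s := lt_of_le_of_lt ha hs.1
    have hn1 : (0:ℝ) < (n:ℝ) - 1 := by
      have : (2:ℝ) ≤ (n:ℝ) := by exact_mod_cast hn
      linarith
    positivity
  rcases lt_trichotomy c r₀ with hcr | hcr | hcr
  · -- c < r₀
    have hsub : Set.Icc c r₀ ⊆ Set.Ioo a b :=
      fun x hx => ⟨lt_of_lt_of_le hc.1 hx.1, lt_of_le_of_lt hx.2 hr₀.2⟩
    set Z : Set ℝ := {r ∈ Set.Icc c r₀ | deriv f r = 0} with hZ_def
    have hZeq : Z = Set.Icc c r₀ ∩ deriv f ⁻¹' {0} := by ext x; simp [hZ_def]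
    have hZclosed : IsClosed Z := by
      rw [hZeq]
      exact (hucont.mono hsub).preimage_isClosed_of_isClosed isClosed_Icc isClosed_singleton
    have hZne : Z.Nonempty := ⟨c, ⟨le_refl c, hcr.le⟩, h1⟩
    have hZbdd : BddAbove Z := BddAbove.mono (fun x hx => hx.1) bddAbove_Icc
    set z : ℝ := sSup Z with hz_def
    have hzZ : z ∈ Z := hZclosed.csSup_mem hZne hZbdd
    have hzmax : ∀ x ∈ Z, x ≤ z := fun x hx => le_csSup hZbdd hx
    have huz : deriv f z = 0 := hzZ.2
    have hzIoo : z ∈ Set.Ioo a b := hsub hzZ.1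
    have hzr₀ : z < r₀ := lt_of_le_of_ne hzZ.1.2 (fun h => by rw [h] at huz; linarith)
    have hupos : ∀ r ∈ Set.Ioc z r₀, 0 < deriv f r := by
      intro r hr
      rcases eq_or_lt_of_le hr.2 with h | h
      · rw [h]; exact hu0
      by_contra hle
      push_neg at hle
      have hrZmem : r ∈ Set.Icc c r₀ := ⟨le_trans hzZ.1.1 hr.1.le, hr.2⟩
      rcases eq_or_lt_of_le hle with h0 | h0
      · exact absurd (hzmax r ⟨hrZmem, h0⟩) (not_le.2 hr.1)
      · obtain ⟨x, hx, hux⟩ := intermediate_value_Ioo h.le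
          (hucont.mono (fun y hy => hsub ⟨le_trans hrZmem.1 hy.1, hy.2⟩)) (⟨h0, hu0⟩ : (0:ℝ) ∈ Set.Ioo _ _)
        exact absurd (hzmax x ⟨⟨le_trans hrZmem.1 hx.1.le, hx.2.le⟩, hux⟩)
          (not_le.2 (lt_trans hr.1 hx.1))
    have hwz_ne : deriv (deriv f) z ≠ 0 := fun h => critzero z hzIoo huz h
    have hwz_pos : 0 < deriv (deriv f) z := by
      rcases hwz_ne.lt_or_gt with h | h
      · exfalso
        have := deriv_nonneg_right' (hdu z hzIoo) hzr₀
          (fun r hr => by rw [huz]; exact (hupos r ⟨hr.1, hr.2.le⟩).le)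
        linarith
      · exact h
    set S : Set ℝ := {r ∈ Set.Icc z r₀ | deriv (deriv f) r = 0} with hS_def
    have hSeq : S = Set.Icc z r₀ ∩ deriv (deriv f) ⁻¹' {0} := by ext x; simp [hS_def]
    have hsub2 : Set.Icc z r₀ ⊆ Set.Ioo a b :=
      fun x hx => ⟨lt_of_lt_of_le hzIoo.1 hx.1, lt_of_le_of_lt hx.2 hr₀.2⟩
    have hSclosed : IsClosed S := by
      rw [hSeq]
      exact (hwcont.mono hsub2).preimage_isClosed_of_isClosed isClosed_Icc isClosed_singleton
    have hSne : S.Nonempty := ⟨r₀, ⟨hzr₀.le, le_refl _⟩, hw0⟩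
    have hSbdd : BddBelow S := BddBelow.mono (fun x hx => hx.1) bddBelow_Icc
    set s : ℝ := sInf S with hs_def
    have hsS : s ∈ S := hSclosed.csInf_mem hSne hSbdd
    have hsmin : ∀ x ∈ S, s ≤ x := fun x hx => csInf_le hSbdd hx
    have hws : deriv (deriv f) s = 0 := hsS.2
    have hzs : z < s := lt_of_le_of_ne hsS.1.1 (fun h => hwz_ne (by rw [← h] at hws; exact hws))
    have hsIoo : s ∈ Set.Ioo a b := hsub2 hsS.1
    have hwpos : ∀ r ∈ Set.Ioo z s, 0 < deriv (deriv f) r := by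
      intro r hr
      have hrIcc : r ∈ Set.Icc z r₀ := ⟨hr.1.le, le_trans hr.2.le hsS.1.2⟩
      have hne : deriv (deriv f) r ≠ 0 := fun h =>
        absurd (hsmin r ⟨hrIcc, h⟩) (not_le.2 hr.2)
      rcases hne.lt_or_gt with h | h
      · exfalso
        obtain ⟨x, hx, hwx⟩ := intermediate_value_Ioo' hr.1.le
          (hwcont.mono (fun y hy => hsub2 ⟨hy.1, le_trans hy.2 hrIcc.2⟩))
          (⟨h, hwz_pos⟩ : (0:ℝ) ∈ Set.Ioo _ _)
        exact absurd (hsmin x ⟨⟨hx.1.le, le_trans hx.2.le hrIcc.2⟩, hwx⟩)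
          (not_le.2 (lt_trans hx.2 hr.2))
      · exact h
    have hle : deriv (deriv (deriv f)) s ≤ 0 :=
      deriv_nonpos_left' (hdw s hsIoo) hzs
        (fun r hr => by rw [hws]; exact (hwpos r hr).le)
    have hgt := third_pos s hsIoo hws (hupos s ⟨hzs, hsS.1.2⟩)
    linarith
  · exact critzero c hc h1 (by rw [← hcr] at hw0; exact hw0)
  · -- r₀ < c
    have hsub : Set.Icc r₀ c ⊆ Set.Ioo a b :=
      fun x hx => ⟨lt_of_lt_of_le hr₀.1 hx.1, lt_of_le_of_lt hx.2 hc.2⟩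
    set Z : Set ℝ := {r ∈ Set.Icc r₀ c | deriv f r = 0} with hZ_def
    have hZeq : Z = Set.Icc r₀ c ∩ deriv f ⁻¹' {0} := by ext x; simp [hZ_def]
    have hZclosed : IsClosed Z := by
      rw [hZeq]
      exact (hucont.mono hsub).preimage_isClosed_of_isClosed isClosed_Icc isClosed_singleton
    have hZne : Z.Nonempty := ⟨c, ⟨hcr.le, le_refl c⟩, h1⟩
    have hZbdd : BddBelow Z := BddBelow.mono (fun x hx => hx.1) bddBelow_Icc
    set z : ℝ := sInf Z with hz_def
    have hzZ : z ∈ Z := hZclosed.csInf_mem hZne hZbdd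
    have hzmin : ∀ x ∈ Z, z ≤ x := fun x hx => csInf_le hZbdd hx
    have huz : deriv f z = 0 := hzZ.2
    have hzIoo : z ∈ Set.Ioo a b := hsub hzZ.1
    have hzr₀ : r₀ < z := lt_of_le_of_ne hzZ.1.1 (fun h => by rw [← h] at huz; linarith)
    have hupos : ∀ r ∈ Set.Ico r₀ z, 0 < deriv f r := by
      intro r hr
      rcases eq_or_lt_of_le hr.1 with h | h
      · rw [← h]; exact hu0
      by_contra hle
      push_neg at hle
      have hrZmem : r ∈ Set.Icc r₀ c := ⟨hr.1, le_trans hr.2.le hzZ.1.2⟩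
      rcases eq_or_lt_of_le hle with h0 | h0
      · exact absurd (hzmin r ⟨hrZmem, h0⟩) (not_le.2 hr.2)
      · obtain ⟨x, hx, hux⟩ := intermediate_value_Ioo' h.le
          (hucont.mono (fun y hy => hsub ⟨hy.1, le_trans hy.2 hrZmem.2⟩))
          (⟨h0, hu0⟩ : (0:ℝ) ∈ Set.Ioo _ _)
        exact absurd (hzmin x ⟨⟨hx.1.le, le_trans hx.2.le hrZmem.2⟩, hux⟩)
          (not_le.2 (lt_trans hx.2 hr.2))
    have hwz_ne : deriv (deriv f) z ≠ 0 := fun h => critzero z hzIoo huz h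
    have hwz_neg : deriv (deriv f) z < 0 := by
      rcases hwz_ne.lt_or_gt with h | h
      · exact h
      · exfalso
        have := deriv_nonpos_left' (hdu z hzIoo) hzr₀
          (fun r hr => by rw [huz]; exact (hupos r ⟨hr.1.le, hr.2⟩).le)
        linarith
    set S : Set ℝ := {r ∈ Set.Icc r₀ z | deriv (deriv f) r = 0} with hS_def
    have hSeq : S = Set.Icc r₀ z ∩ deriv (deriv f) ⁻¹' {0} := by ext x; simp [hS_def]
    have hsub2 : Set.Icc r₀ z ⊆ Set.Ioo a b :=
      fun x hx => ⟨lt_of_lt_of_le hr₀.1 hx.1, lt_of_le_of_lt hx.2 hzIoo.2⟩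
    have hSclosed : IsClosed S := by
      rw [hSeq]
      exact (hwcont.mono hsub2).preimage_isClosed_of_isClosed isClosed_Icc isClosed_singleton
    have hSne : S.Nonempty := ⟨r₀, ⟨le_refl _, hzr₀.le⟩, hw0⟩
    have hSbdd : BddAbove S := BddAbove.mono (fun x hx => hx.1) bddAbove_Icc
    set s : ℝ := sSup S with hs_def
    have hsS : s ∈ S := hSclosed.csSup_mem hSne hSbdd
    have hsmax : ∀ x ∈ S, x ≤ s := fun x hx => le_csSup hSbdd hx
    have hws : deriv (deriv f) s = 0 := hsS.2
    have hsz : s < z := lt_of_le_of_ne hsS.1.2 (fun h => hwz_ne (by rw [h] at hws; exact hws))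
    have hsIoo : s ∈ Set.Ioo a b := hsub2 hsS.1
    have hwneg : ∀ r ∈ Set.Ioo s z, deriv (deriv f) r < 0 := by
      intro r hr
      have hrIcc : r ∈ Set.Icc r₀ z := ⟨le_trans hsS.1.1 hr.1.le, hr.2.le⟩
      have hne : deriv (deriv f) r ≠ 0 := fun h =>
        absurd (hsmax r ⟨hrIcc, h⟩) (not_le.2 hr.1)
      rcases hne.lt_or_gt with h | h
      · exact h
      · exfalso
        obtain ⟨x, hx, hwx⟩ := intermediate_value_Ioo' hr.2.le
          (hwcont.mono (fun y hy => hsub2 ⟨le_trans hrIcc.1 hy.1, hy.2⟩))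
          (⟨hwz_neg, h⟩ : (0:ℝ) ∈ Set.Ioo _ _)
        exact absurd (hsmax x ⟨⟨le_trans hrIcc.1 hx.1.le, hx.2.le⟩, hwx⟩)
          (not_le.2 (lt_trans hr.1 hx.1))
    have hle : deriv (deriv (deriv f)) s ≤ 0 :=
      deriv_nonpos_right' (hdw s hsIoo) hsz
        (fun r hr => by rw [hws]; exact (hwneg r hr).le)
    have hgt := third_pos s hsIoo hws (hupos s ⟨hsS.1.1, hsz⟩)
    linarith


theorem stmt_7 (n : ℕ) (hn : 2 ≤ n) (lam : ℝ) (a b : ℝ) (ha : 0 ≤ a) (hab : a < b)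
    (f : ℝ → ℝ) (hf : ContDiffOn ℝ (⊤ : ℕ∞) f (Set.Ioo a b))
    (hode : ∀ r ∈ Set.Ioo a b,
      deriv (deriv f) r / (1 + (deriv f r) ^ 2)
        = (r - ((n : ℝ) - 1) / r) * deriv f r - f r
            - lam * Real.sqrt (1 + (deriv f r) ^ 2))
    (hnc : ¬ ∀ r ∈ Set.Ioo a b, f r = -lam)
    (c : ℝ) (hc : c ∈ Set.Ioo a b) (h1 : deriv f c = 0) :
    (∀ r ∈ Set.Ioo a b, 0 < deriv (deriv f) r) ∨
      (∀ r ∈ Set.Ioo a b, deriv (deriv f) r < 0) := by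
  have hE : ∀ r ∈ Set.Ioo a b, deriv (deriv f) r
      = (1 + (deriv f r)^2) * ((r - ((n:ℝ)-1)/r) * deriv f r - f r
          - lam * Real.sqrt (1 + (deriv f r)^2)) := by
    intro r hr
    have hpos : (0:ℝ) < 1 + (deriv f r)^2 := by positivity
    have h := hode r hr
    rw [div_eq_iff (ne_of_gt hpos)] at h
    rw [h]; ring
  -- the second derivative never vanishes
  have hne : ∀ r ∈ Set.Ioo a b, deriv (deriv f) r ≠ 0 := by
    intro r hr hw
    rcases lt_trichotomy (deriv f r) 0 with hu | hu | hu
    · -- apply pos_case to -f, -lam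
      have hg1 : deriv (fun x => -f x) = fun x => -deriv f x := funext fun x => deriv.neg
      have hg2 : deriv (deriv (fun x => -f x)) = fun x => -deriv (deriv f) x := by
        rw [hg1]; exact funext fun x => deriv.neg
      have hEg : ∀ r ∈ Set.Ioo a b, deriv (deriv (fun x => -f x)) r
          = (1 + (deriv (fun x => -f x) r)^2) * ((r - ((n:ℝ)-1)/r) * deriv (fun x => -f x) r
              - (fun x => -f x) r - (-lam) * Real.sqrt (1 + (deriv (fun x => -f x) r)^2)) := by
        intro x hx
        simp only [hg1, deriv.fun_neg, neg_sq]
        rw [hE x hx]; ring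
      have hncg : ¬ ∀ x ∈ Set.Ioo a b, (fun x => -f x) x = -(-lam) := by
        intro h
        apply hnc
        intro x hx
        have := h x hx
        simp only [neg_neg] at this
        linarith
      exact pos_case n hn (-lam) a b ha (fun x => -f x) hf.neg hEg hncg c hc
        (by simp only [hg1]; simp [h1]) r hr
        (by simp only [hg1, deriv.fun_neg, hw, neg_zero]) (by simp only [hg1]; simp; linarith)
    · -- critical point with vanishing second derivative
      have h := hE r hr
      rw [hu, hw] at h
      norm_num [Real.sqrt_one] at h
      have hfr : f r = -lam := by linarith
      exact hnc (unique_const n lam a b ha f hf hE r hr hfr hu)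
    · exact pos_case n hn lam a b ha f hf hE hnc c hc h1 r hr hw hu
  -- conclude by the intermediate value theorem
  by_contra hcon
  push_neg at hcon
  obtain ⟨⟨p, hp, hp'⟩, ⟨q, hq, hq'⟩⟩ := hcon
  have hp2 : deriv (deriv f) p < 0 := lt_of_le_of_ne hp' (hne p hp)
  have hq2 : 0 < deriv (deriv f) q := lt_of_le_of_ne hq' (Ne.symm (hne q hq))
  have hf1 : ContDiffOn ℝ (⊤ : ℕ∞) (deriv f) (Set.Ioo a b) := hf.deriv_of_isOpen isOpen_Ioo (by simp)
  have hf2 : ContDiffOn ℝ (⊤ : ℕ∞) (deriv (deriv f)) (Set.Ioo a b) :=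
    hf1.deriv_of_isOpen isOpen_Ioo (by simp)
  have hsub : Set.uIcc p q ⊆ Set.Ioo a b := by
    intro x hx
    rw [Set.uIcc_eq_union] at hx
    rcases hx with hx | hx
    · exact ⟨lt_of_lt_of_le hp.1 hx.1, lt_of_le_of_lt hx.2 hq.2⟩
    · exact ⟨lt_of_lt_of_le hq.1 hx.1, lt_of_le_of_lt hx.2 hp.2⟩
  obtain ⟨x, hx, hwx⟩ := intermediate_value_uIcc (hf2.continuousOn.mono hsub)
    (Set.mem_uIcc.2 (Or.inl ⟨hp2.le, hq2.le⟩))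
  exact hne x (hsub hx) hwx
end

section
/- Let f : (a,b) → ℝ with 0 ≤ a < b be a smooth non-constant solution of f''/(1+(f')²) = (r − (n−1)/r)·f' − f − λ·√(1+(f')²), and suppose f''(c) = 0 at some c ∈ (a,b). If f'(c) > 0, then f''(r) < 0 for all r ∈ (a,c) and f''(r) > 0 for all r ∈ (c,b); if f'(c) < 0, then f''(r) > 0 for all r ∈ (a,c) and f''(r) < 0 for all r ∈ (c,b). In particular, f'' has at most one zero in (a,b). -/
set_option maxHeartbeats 1000000
section StmtAux
open Set Filter Topology


theorem aux_slope {d : ℝ} {h : ℝ → ℝ} {D : ℝ} (hD : 0 < D) (hD' : HasDerivAt h D d)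
    (hd0 : h d = 0) : (∀ᶠ x in 𝓝[>] d, 0 < h x) ∧ (∀ᶠ x in 𝓝[<] d, h x < 0) := by
  have hs := hasDerivAt_iff_tendsto_slope.mp hD'
  have hev : ∀ᶠ x in 𝓝[≠] d, 0 < slope h d x := hs.eventually (eventually_gt_nhds hD)
  have hsubR : 𝓝[>] d ≤ 𝓝[≠] d := nhdsWithin_mono d fun x hx => ne_of_gt hx
  have hsubL : 𝓝[<] d ≤ 𝓝[≠] d := nhdsWithin_mono d fun x hx => ne_of_lt hx
  constructor
  · filter_upwards [hsubR hev, self_mem_nhdsWithin] with x hx hx'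
    have h1 : 0 < slope h d x * (x - d) := mul_pos hx (sub_pos.mpr hx')
    rwa [slope_def_field, hd0, sub_zero, div_mul_cancel₀] at h1
    exact sub_ne_zero.mpr (ne_of_gt hx')
  · filter_upwards [hsubL hev, self_mem_nhdsWithin] with x hx hx'
    have h1 : slope h d x * (x - d) < 0 := mul_neg_of_pos_of_neg hx (sub_neg.mpr hx')
    rwa [slope_def_field, hd0, sub_zero, div_mul_cancel₀] at h1
    exact sub_ne_zero.mpr (ne_of_lt hx')

theorem aux_prop_right {α β cc : ℝ} {g h : ℝ → ℝ}
    (hg : ∀ x ∈ Set.Ioo α β, HasDerivAt g (h x) x)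
    (hh : ContinuousOn h (Set.Ioo α β))
    (key : ∀ d ∈ Set.Ioo α β, h d = 0 → 0 < g d → ∃ D, 0 < D ∧ HasDerivAt h D d)
    (hcc : cc ∈ Set.Ioo α β) (h0 : h cc = 0) (hgc : 0 < g cc) :
    ∀ r ∈ Set.Ioo cc β, 0 < h r := by
  obtain ⟨D, hD, hD'⟩ := key cc hcc h0 hgc
  have hR := (aux_slope hD hD' h0).1
  -- find e with h > 0 on Ioc cc e, e < β
  obtain ⟨e', he', hsub⟩ := mem_nhdsGT_iff_exists_Ioc_subset.mp hR
  set e : ℝ := min e' ((cc + β) / 2) with he_def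
  have hcce : cc < e := lt_min he' (by linarith [hcc.2])
  have heβ : e < β := lt_of_le_of_lt (min_le_right _ _) (by linarith [hcc.2])
  have hepos : ∀ x ∈ Ioc cc e, 0 < h x := fun x hx =>
    hsub ⟨hx.1, hx.2.trans (min_le_left _ _)⟩
  -- by contradiction
  by_contra hcon
  push_neg at hcon
  obtain ⟨d, hd, hd0⟩ := hcon
  have hed : e < d := by
    by_contra hle
    push_neg at hle
    exact absurd (hepos d ⟨hd.1, hle⟩) (not_lt.mpr hd0)
  set S : Set ℝ := {x ∈ Icc e d | h x ≤ 0} with hS_def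
  have hIcc_sub : Icc e d ⊆ Ioo α β := fun x hx =>
    ⟨lt_trans hcc.1 (lt_of_lt_of_le hcce hx.1), lt_of_le_of_lt hx.2 hd.2⟩
  have hSclosed : IsClosed S := by
    have : S = Icc e d ∩ h ⁻¹' (Iic 0) := by ext x; simp [hS_def, and_comm]
    rw [this]
    exact (hh.mono hIcc_sub).preimage_isClosed_of_isClosed isClosed_Icc isClosed_Iic
  have hSne : S.Nonempty := ⟨d, ⟨le_of_lt hed, le_refl d⟩, hd0⟩
  have hSbdd : BddBelow S := ⟨e, fun x hx => hx.1.1⟩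
  set d0 : ℝ := sInf S with hd0_def
  have hd0S : d0 ∈ S := hSclosed.csInf_mem hSne hSbdd
  have hd0Ioo : d0 ∈ Ioo α β := hIcc_sub hd0S.1
  have hccd0 : cc < d0 := lt_of_lt_of_le hcce hd0S.1.1
  have hpos : ∀ x ∈ Ioo cc d0, 0 < h x := by
    intro x hx
    rcases le_or_gt x e with hxe | hxe
    · exact hepos x ⟨hx.1, hxe⟩
    · by_contra hxneg
      push_neg at hxneg
      have hxS : x ∈ S := ⟨⟨le_of_lt hxe, le_trans (le_of_lt hx.2) hd0S.1.2⟩, hxneg⟩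
      exact absurd (csInf_le hSbdd hxS) (not_le.mpr hx.2)
  have hd0zero : h d0 = 0 := by
    refine le_antisymm hd0S.2 ?_
    have hcont : ContinuousAt h d0 := (hh.continuousAt (isOpen_Ioo.mem_nhds hd0Ioo))
    have htend : Tendsto h (𝓝[<] d0) (𝓝 (h d0)) :=
      hcont.continuousWithinAt.tendsto
    refine ge_of_tendsto htend ?_
    filter_upwards [Ioo_mem_nhdsLT_of_mem ⟨hccd0, le_refl d0⟩] with x hx
    exact le_of_lt (hpos x hx)
  have hgd0 : 0 < g d0 := by
    have hmono : StrictMonoOn g (Icc cc d0) := by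
      apply strictMonoOn_of_deriv_pos (convex_Icc cc d0)
      · intro x hx
        have hxIoo : x ∈ Ioo α β := ⟨lt_of_lt_of_le hcc.1 hx.1,
          lt_of_le_of_lt hx.2 hd0Ioo.2⟩
        exact (hg x hxIoo).continuousAt.continuousWithinAt
      · intro x hx
        rw [interior_Icc] at hx
        have hxIoo : x ∈ Ioo α β := ⟨lt_trans hcc.1 hx.1, lt_trans hx.2 hd0Ioo.2⟩
        rw [(hg x hxIoo).deriv]
        exact hpos x hx
    have := hmono (left_mem_Icc.mpr (le_of_lt hccd0)) (right_mem_Icc.mpr (le_of_lt hccd0)) hccd0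
    linarith
  obtain ⟨D2, hD2, hD2'⟩ := key d0 hd0Ioo hd0zero hgd0
  have hL := (aux_slope hD2 hD2' hd0zero).2
  have : ∀ᶠ x in 𝓝[<] d0, False := by
    filter_upwards [hL, Ioo_mem_nhdsLT_of_mem ⟨hccd0, le_refl d0⟩] with x hx hx'
    exact absurd (hpos x hx') (not_lt.mpr (le_of_lt hx))
  obtain ⟨x, hx⟩ := this.exists
  exact hx

theorem aux_prop_left {α β cc : ℝ} {g h : ℝ → ℝ}
    (hg : ∀ x ∈ Set.Ioo α β, HasDerivAt g (h x) x)
    (hh : ContinuousOn h (Set.Ioo α β))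
    (key : ∀ d ∈ Set.Ioo α β, h d = 0 → 0 < g d → ∃ D, 0 < D ∧ HasDerivAt h D d)
    (hcc : cc ∈ Set.Ioo α β) (h0 : h cc = 0) (hgc : 0 < g cc) :
    ∀ r ∈ Set.Ioo α cc, h r < 0 := by
  have hmem : ∀ x : ℝ, x ∈ Set.Ioo (-β) (-α) → -x ∈ Set.Ioo α β := by
    intro x hx; exact ⟨by linarith [hx.2], by linarith [hx.1]⟩
  have hg'' : ∀ x ∈ Set.Ioo (-β) (-α),
      HasDerivAt (fun y => g (-y)) (-(h (-x))) x := by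
    intro x hx
    have := (hg (-x) (hmem x hx)).comp x (hasDerivAt_neg x)
    simpa [Function.comp_def] using this
  have hh' : ContinuousOn (fun y => -(h (-y))) (Set.Ioo (-β) (-α)) :=
    ((hh.comp continuous_neg.continuousOn hmem).neg)
  have key' : ∀ d ∈ Set.Ioo (-β) (-α), -(h (-d)) = 0 → 0 < g (-d) →
      ∃ D, 0 < D ∧ HasDerivAt (fun y => -(h (-y))) D d := by
    intro d hd hd0 hgd
    obtain ⟨D, hD, hD'⟩ := key (-d) (hmem d hd) (by linarith : h (-d) = 0) hgd
    refine ⟨D, hD, ?_⟩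
    have := (hD'.comp d (hasDerivAt_neg d)).neg
    simpa [Function.comp_def, Pi.neg_def] using this
  have hres := aux_prop_right (g := fun y => g (-y)) (h := fun y => -(h (-y)))
    hg'' hh' key' (cc := -cc) ⟨by linarith [hcc.2], by linarith [hcc.1]⟩
    (by simpa using h0) (by simpa using hgc)
  intro r hr
  have := hres (-r) ⟨by linarith [hr.2], by linarith [hr.1]⟩
  simp only [neg_neg] at this
  linarith

theorem aux_key {a b lam m : ℝ} {f : ℝ → ℝ} (ha : 0 ≤ a)
    (hfd : ∀ t ∈ Set.Ioo a b, HasDerivAt f (deriv f t) t)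
    (hgd : ∀ t ∈ Set.Ioo a b, HasDerivAt (deriv f) (deriv (deriv f) t) t)
    (hode' : ∀ t ∈ Set.Ioo a b, deriv (deriv f) t
      = (1 + deriv f t ^ 2) * ((t - m / t) * deriv f t - f t
          - lam * Real.sqrt (1 + deriv f t ^ 2)))
    {d : ℝ} (hd : d ∈ Set.Ioo a b) (hd0 : deriv (deriv f) d = 0) :
    HasDerivAt (deriv (deriv f))
      ((1 + deriv f d ^ 2) * (m / d ^ 2) * deriv f d) d := by
  have hd_pos : 0 < d := lt_of_le_of_lt ha hd.1
  have hsq_pos : 0 < 1 + deriv f d ^ 2 := by positivity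
  have hs_pos : 0 < Real.sqrt (1 + deriv f d ^ 2) := Real.sqrt_pos.mpr hsq_pos
  have Hg := hgd d hd
  have Hf := hfd d hd
  have H1 : HasDerivAt (fun r => 1 + deriv f r ^ 2)
      (2 * deriv f d ^ 1 * deriv (deriv f) d) d := (Hg.pow 2).const_add 1
  have H2 : HasDerivAt (fun r => r - m / r)
      (1 - (0 * d - m * 1) / d ^ 2) d :=
    (hasDerivAt_id d).sub (((hasDerivAt_const d m).div (hasDerivAt_id d) (ne_of_gt hd_pos)))
  have H3 : HasDerivAt (fun r => Real.sqrt (1 + deriv f r ^ 2))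
      (1 / (2 * Real.sqrt (1 + deriv f d ^ 2)) * (2 * deriv f d ^ 1 * deriv (deriv f) d)) d :=
    (Real.hasDerivAt_sqrt (ne_of_gt hsq_pos)).comp d H1
  have HH := H1.mul (((H2.mul Hg).sub Hf).sub (H3.const_mul lam))
  have heq : deriv (deriv f) =ᶠ[𝓝 d] (fun r => (1 + deriv f r ^ 2) *
      ((r - m / r) * deriv f r - f r - lam * Real.sqrt (1 + deriv f r ^ 2))) :=
    eventually_of_mem (isOpen_Ioo.mem_nhds hd) hode'
  have Hfinal := HH.congr_of_eventuallyEq heq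
  refine HasDerivAt.congr_deriv Hfinal ?_
  simp only [Pi.mul_apply, Pi.sub_apply]
  rw [hd0]
  field_simp
  ring

theorem aux_ineq {T G u lam M A C s h : ℝ} (hT : |T| ≤ A) (hu : |u| ≤ M) (hG : |G| ≤ M)
    (hM : 0 < M) (hA : 0 < A) (hs1 : 1 ≤ s) (hs2 : s ^ 2 = 1 + G ^ 2)
    (hC : C = (1 + M ^ 2) * (A + 1 + |lam| * M / 2))
    (hh : h = (1 + G ^ 2) * (T * G - u - lam * (s - 1))) :
    |2 * u * G + 2 * G * h| ≤ (1 + 3 * C) * (u ^ 2 + G ^ 2) := by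
  have hs3 : s - 1 ≤ G ^ 2 / 2 := by nlinarith [hs1, hs2]
  have h3 : s - 1 ≤ M / 2 * |G| := by nlinarith [hs3, sq_abs G, hG, abs_nonneg G]
  have hinner : |T * G - u - lam * (s - 1)| ≤ A * |G| + |u| + |lam| * (M / 2 * |G|) := by
    have h1 : |T * G - u - lam * (s - 1)| ≤ |T * G| + |u| + |lam * (s - 1)| := by
      calc |T * G - u - lam * (s - 1)| ≤ |T * G - u| + |lam * (s - 1)| := abs_sub _ _
        _ ≤ |T * G| + |u| + |lam * (s - 1)| := by
            have := abs_sub (T * G) u; linarith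
    rw [abs_mul, abs_mul, abs_of_nonneg (by linarith : (0:ℝ) ≤ s - 1)] at h1
    have h2 : |T| * |G| ≤ A * |G| := mul_le_mul_of_nonneg_right hT (abs_nonneg G)
    have h4 : |lam| * (s - 1) ≤ |lam| * (M / 2 * |G|) :=
      mul_le_mul_of_nonneg_left h3 (abs_nonneg lam)
    linarith
  have habs_h : |h| ≤ C * (|u| + |G|) := by
    rw [hh, abs_mul, abs_of_nonneg (by positivity : (0:ℝ) ≤ 1 + G ^ 2)]
    have hf1 : 1 + G ^ 2 ≤ 1 + M ^ 2 := by nlinarith [hG, abs_nonneg G, sq_abs G]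
    have hstep : (1 + G ^ 2) * |T * G - u - lam * (s - 1)|
        ≤ (1 + M ^ 2) * (A * |G| + |u| + |lam| * (M / 2 * |G|)) :=
      mul_le_mul hf1 hinner (abs_nonneg _) (by positivity)
    have hfinal : (1 + M ^ 2) * (A * |G| + |u| + |lam| * (M / 2 * |G|)) ≤ C * (|u| + |G|) := by
      rw [hC]
      nlinarith [mul_nonneg (show (0:ℝ) ≤ 1 + M ^ 2 by positivity)
        (show (0:ℝ) ≤ A * |u| + |lam| * (M / 2) * |u| + |G| by positivity)]
    linarith
  have hC_pos : 0 < C := by rw [hC]; positivity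
  have hE'eq : |2 * u * G + 2 * G * h| ≤ 2 * |u| * |G| + 2 * |G| * |h| := by
    calc |2 * u * G + 2 * G * h| ≤ |2 * u * G| + |2 * G * h| := abs_add_le _ _
      _ = 2 * |u| * |G| + 2 * |G| * |h| := by
          rw [abs_mul, abs_mul, abs_mul, abs_mul]; simp [abs_of_nonneg]
  have hprod : 2 * |G| * |h| ≤ 2 * |G| * (C * (|u| + |G|)) :=
    mul_le_mul_of_nonneg_left habs_h (by positivity)
  nlinarith [hE'eq, sq_abs u, sq_abs G, sq_nonneg (|u| - |G|),
    mul_nonneg hC_pos.le (sq_nonneg (|u| - |G|)), abs_nonneg u, abs_nonneg G]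



theorem aux_unique {a b lam m : ℝ} {f : ℝ → ℝ} (ha : 0 ≤ a) (hm : 0 ≤ m)
    (hfd : ∀ t ∈ Set.Ioo a b, HasDerivAt f (deriv f t) t)
    (hgd : ∀ t ∈ Set.Ioo a b, HasDerivAt (deriv f) (deriv (deriv f) t) t)
    (hode' : ∀ t ∈ Set.Ioo a b, deriv (deriv f) t
      = (1 + deriv f t ^ 2) * ((t - m / t) * deriv f t - f t
          - lam * Real.sqrt (1 + deriv f t ^ 2)))
    {c : ℝ} (hc : c ∈ Set.Ioo a b) (hfc : f c = -lam) (hgc : deriv f c = 0) :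
    ∀ r ∈ Set.Ioo a b, f r = -lam := by
  intro r hr
  set c' : ℝ := (a + min r c) / 2 with hc'_def
  set b'' : ℝ := (max r c + b) / 2 with hb''_def
  have hminrc : a < min r c := lt_min hr.1 hc.1
  have hmaxrc : max r c < b := max_lt hr.2 hc.2
  have hac' : a < c' := by rw [hc'_def]; linarith
  have hc'min : c' < min r c := by rw [hc'_def]; linarith
  have hmaxb'' : max r c < b'' := by rw [hb''_def]; linarith
  have hb''b : b'' < b := by rw [hb''_def]; linarith
  have hc'pos : 0 < c' := lt_of_le_of_lt ha hac'
  have hc'c : c' < c := lt_of_lt_of_le hc'min (min_le_right r c)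
  have hcb'' : c < b'' := lt_of_le_of_lt (le_max_right r c) hmaxb''
  have hc'b'' : c' < b'' := hc'c.trans hcb''
  have hsub : Set.Icc c' b'' ⊆ Set.Ioo a b := fun x hx =>
    ⟨lt_of_lt_of_le hac' hx.1, lt_of_le_of_lt hx.2 hb''b⟩
  have hrmem : r ∈ Set.Icc c' b'' :=
    ⟨le_of_lt (lt_of_lt_of_le hc'min (min_le_left r c)),
     le_of_lt (lt_of_le_of_lt (le_max_left r c) hmaxb'')⟩
  -- bounds
  have hfc_cont : ContinuousOn f (Set.Icc c' b'') := fun x hx =>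
    (hfd x (hsub hx)).continuousAt.continuousWithinAt
  have hgc_cont : ContinuousOn (deriv f) (Set.Icc c' b'') := fun x hx =>
    (hgd x (hsub hx)).continuousAt.continuousWithinAt
  obtain ⟨C1, hC1⟩ := isCompact_Icc.exists_bound_of_continuousOn hfc_cont
  obtain ⟨C2, hC2⟩ := isCompact_Icc.exists_bound_of_continuousOn hgc_cont
  set M : ℝ := |C1| + |lam| + |C2| + 1 with hM_def
  have hM_pos : 0 < M := by positivity
  have hu_bd : ∀ x ∈ Set.Icc c' b'', |f x + lam| ≤ M := by
    intro x hx
    have := hC1 x hx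
    rw [Real.norm_eq_abs] at this
    calc |f x + lam| ≤ |f x| + |lam| := abs_add_le _ _
      _ ≤ M := by rw [hM_def]; have := le_abs_self C1; have := abs_nonneg C2; linarith
  have hG_bd : ∀ x ∈ Set.Icc c' b'', |deriv f x| ≤ M := by
    intro x hx
    have := hC2 x hx
    rw [Real.norm_eq_abs] at this
    rw [hM_def]
    have := le_abs_self C2
    have := abs_nonneg C1
    have := abs_nonneg lam
    linarith
  set A : ℝ := b'' + m / c' with hA_def
  have hA_pos : 0 < A := by
    have : 0 < b'' := lt_trans hc'pos hc'b''
    have : 0 ≤ m / c' := div_nonneg hm (le_of_lt hc'pos)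
    rw [hA_def]; linarith
  set C : ℝ := (1 + M ^ 2) * (A + 1 + |lam| * M / 2) with hC_def
  have hC_pos : 0 < C := by rw [hC_def]; positivity
  set K : ℝ := 1 + 3 * C with hK_def
  -- E and its derivative
  set E : ℝ → ℝ := fun t => (f t + lam) ^ 2 + (deriv f t) ^ 2 with hE_def
  set E' : ℝ → ℝ := fun t => 2 * (f t + lam) ^ 1 * deriv f t
      + 2 * (deriv f t) ^ 1 * deriv (deriv f) t with hE'_def
  have hE : ∀ t ∈ Set.Ioo a b, HasDerivAt E (E' t) t := fun t ht =>
    (((hfd t ht).add_const lam).pow 2).add ((hgd t ht).pow 2)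
  have hEcont : ContinuousOn E (Set.Icc c' b'') := fun x hx =>
    (hE x (hsub hx)).continuousAt.continuousWithinAt
  have hEc : E c = 0 := by
    rw [hE_def]; simp [hfc, hgc]
  have hE_nonneg : ∀ t, 0 ≤ E t := fun t => by rw [hE_def]; positivity
  -- the key bound
  have hbnd : ∀ x ∈ Set.Icc c' b'', |E' x| ≤ K * E x := by
    intro x hx
    have hxIoo := hsub hx
    have hxpos : 0 < x := lt_of_lt_of_le hc'pos hx.1
    have hs1 : 1 ≤ Real.sqrt (1 + deriv f x ^ 2) := by
      have h := Real.sqrt_le_sqrt (show (1:ℝ) ≤ 1 + deriv f x ^ 2 by nlinarith [sq_nonneg (deriv f x)])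
      rwa [Real.sqrt_one] at h
    have hs2 : Real.sqrt (1 + deriv f x ^ 2) ^ 2 = 1 + deriv f x ^ 2 :=
      Real.sq_sqrt (by positivity)
    have hT : |x - m / x| ≤ A := by
      have hmx1 : m / x ≤ m / c' := div_le_div_of_nonneg_left hm hc'pos hx.1
      have hmx0 : 0 ≤ m / x := div_nonneg hm (le_of_lt hxpos)
      rw [abs_le, hA_def]
      constructor
      · have h5 := hx.1
        have h6 : 0 < b'' := lt_trans hc'pos hc'b''
        nlinarith
      · have h5 := hx.2
        have h6 : 0 ≤ m / c' := div_nonneg hm (le_of_lt hc'pos)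
        linarith
    have heq : deriv (deriv f) x = (1 + deriv f x ^ 2) * ((x - m / x) * deriv f x
        - (f x + lam) - lam * (Real.sqrt (1 + deriv f x ^ 2) - 1)) := by
      rw [hode' x hxIoo]; ring
    have hmain := aux_ineq hT (hu_bd x hx) (hG_bd x hx) hM_pos hA_pos hs1 hs2 hC_def heq
    have hle : |E' x| = |2 * (f x + lam) * deriv f x
        + 2 * deriv f x * deriv (deriv f) x| := by
      rw [hE'_def]; norm_num
    rw [hle, hK_def, hE_def]
    exact hmain
  -- Gronwall forward: E = 0 on [c, b'']
  have hfwd : ∀ x ∈ Set.Icc c b'', E x = 0 := by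
    have hsub2 : Set.Icc c b'' ⊆ Set.Icc c' b'' := Set.Icc_subset_Icc (le_of_lt hc'c) le_rfl
    have := norm_le_gronwallBound_of_norm_deriv_right_le (f := E) (f' := E')
      (δ := 0) (K := K) (ε := 0) (a := c) (b := b'')
      (hEcont.mono hsub2)
      (fun x hx => (hE x (hsub (hsub2 (Set.Ico_subset_Icc_self hx)))).hasDerivWithinAt)
      (by rw [Real.norm_eq_abs, hEc, abs_zero])
      (fun x hx => by
        rw [Real.norm_eq_abs, Real.norm_eq_abs, abs_of_nonneg (hE_nonneg x), add_zero]
        exact hbnd x (hsub2 (Set.Ico_subset_Icc_self hx)))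
    intro x hx
    have h0 := this x hx
    rw [gronwallBound_ε0_δ0, Real.norm_eq_abs, abs_of_nonneg (hE_nonneg x)] at h0
    linarith [hE_nonneg x]
  -- Gronwall backward: E = 0 on [c', c]
  have hbwd : ∀ x ∈ Set.Icc c' c, E x = 0 := by
    set Et : ℝ → ℝ := fun t => E (2 * c - t) with hEt_def
    have hmap : ∀ t ∈ Set.Icc c (2 * c - c'), 2 * c - t ∈ Set.Icc c' c := by
      intro t ht; exact ⟨by linarith [ht.2], by linarith [ht.1]⟩
    have hsub3 : Set.Icc c' c ⊆ Set.Icc c' b'' := Set.Icc_subset_Icc le_rfl (le_of_lt hcb'')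
    have hEt_deriv : ∀ t ∈ Set.Ico c (2 * c - c'),
        HasDerivAt Et (-(E' (2 * c - t))) t := by
      intro t ht
      have h2t := hmap t (Set.Ico_subset_Icc_self ht)
      have := (hE (2 * c - t) (hsub (hsub3 h2t))).comp t
        ((hasDerivAt_const t (2 * c)).sub (hasDerivAt_id t))
      simpa [Function.comp_def] using this
    have hEtcont : ContinuousOn Et (Set.Icc c (2 * c - c')) := by
      apply (hEcont.mono hsub3).comp (Continuous.continuousOn (by continuity)) hmap
    have := norm_le_gronwallBound_of_norm_deriv_right_le (f := Et) (f' := fun t => -(E' (2 * c - t)))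
      (δ := 0) (K := K) (ε := 0) (a := c) (b := 2 * c - c')
      hEtcont
      (fun t ht => (hEt_deriv t ht).hasDerivWithinAt)
      (by
        have h2cc : 2 * c - c = c := by ring
        rw [Real.norm_eq_abs, hEt_def]
        simp only []
        rw [h2cc, hEc, abs_zero])
      (fun t ht => by
        rw [Real.norm_eq_abs, Real.norm_eq_abs, abs_neg, add_zero, hEt_def]
        simp only []
        rw [abs_of_nonneg (hE_nonneg _)]
        exact hbnd _ (hsub3 (hmap t (Set.Ico_subset_Icc_self ht))))
    intro x hx
    have hxmem : 2 * c - x ∈ Set.Icc c (2 * c - c') := ⟨by linarith [hx.2], by linarith [hx.1]⟩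
    have h0 := this (2 * c - x) hxmem
    rw [gronwallBound_ε0_δ0, Real.norm_eq_abs] at h0
    have hx' : Et (2 * c - x) = E x := by
      have h2cx : 2 * c - (2 * c - x) = x := by ring
      rw [hEt_def]
      simp only []
      rw [h2cx]
    rw [hx', abs_of_nonneg (hE_nonneg x)] at h0
    linarith [hE_nonneg x]
  -- conclude
  have hEr : E r = 0 := by
    rcases le_or_gt c r with hcr | hcr
    · exact hfwd r ⟨hcr, hrmem.2⟩
    · exact hbwd r ⟨hrmem.1, le_of_lt hcr⟩
  have h1 : (f r + lam) ^ 2 = 0 := by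
    have hEr' : (f r + lam) ^ 2 + deriv f r ^ 2 = 0 := hEr
    nlinarith [sq_nonneg (f r + lam), sq_nonneg (deriv f r), hEr']
  have := pow_eq_zero_iff (n := 2) (by norm_num) |>.mp h1
  linarith


theorem stmt_8 (n : ℕ) (hn : 2 ≤ n) (lam : ℝ) (a b : ℝ) (ha : 0 ≤ a) (hab : a < b)
    (f : ℝ → ℝ) (hf : ContDiffOn ℝ (⊤ : ℕ∞) f (Set.Ioo a b))
    (hode : ∀ r ∈ Set.Ioo a b,
      deriv (deriv f) r / (1 + (deriv f r) ^ 2)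
        = (r - ((n : ℝ) - 1) / r) * deriv f r - f r
            - lam * Real.sqrt (1 + (deriv f r) ^ 2))
    (hnc : ¬ ∀ r ∈ Set.Ioo a b, f r = -lam)
    (c : ℝ) (hc : c ∈ Set.Ioo a b) (h2 : deriv (deriv f) c = 0) :
    (0 < deriv f c →
      (∀ r ∈ Set.Ioo a c, deriv (deriv f) r < 0) ∧
        (∀ r ∈ Set.Ioo c b, 0 < deriv (deriv f) r)) ∧
    (deriv f c < 0 →
      (∀ r ∈ Set.Ioo a c, 0 < deriv (deriv f) r) ∧
        (∀ r ∈ Set.Ioo c b, deriv (deriv f) r < 0)) ∧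
    (∀ r ∈ Set.Ioo a b, deriv (deriv f) r = 0 → r = c) := by
  have hopen : IsOpen (Set.Ioo a b) := isOpen_Ioo
  have hm1 : (1:ℝ) ≤ (n:ℝ) - 1 := by
    have : (2:ℝ) ≤ (n:ℝ) := by exact_mod_cast hn
    linarith
  have hfd : ∀ t ∈ Set.Ioo a b, HasDerivAt f (deriv f t) t := fun t ht =>
    ((hf.differentiableOn (by simp)).differentiableAt (hopen.mem_nhds ht)).hasDerivAt
  have hg_smooth : ContDiffOn ℝ (⊤ : ℕ∞) (deriv f) (Set.Ioo a b) :=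
    hf.deriv_of_isOpen hopen (by simp)
  have hh_smooth : ContDiffOn ℝ (⊤ : ℕ∞) (deriv (deriv f)) (Set.Ioo a b) :=
    hg_smooth.deriv_of_isOpen hopen (by simp)
  have hgd : ∀ t ∈ Set.Ioo a b, HasDerivAt (deriv f) (deriv (deriv f) t) t := fun t ht =>
    ((hg_smooth.differentiableOn (by simp)).differentiableAt (hopen.mem_nhds ht)).hasDerivAt
  have hhc : ContinuousOn (deriv (deriv f)) (Set.Ioo a b) := hh_smooth.continuousOn
  have hode' : ∀ t ∈ Set.Ioo a b, deriv (deriv f) t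
      = (1 + deriv f t ^ 2) * ((t - ((n:ℝ) - 1) / t) * deriv f t - f t
          - lam * Real.sqrt (1 + deriv f t ^ 2)) := by
    intro t ht
    have h := hode t ht
    have hpos : (0:ℝ) < 1 + deriv f t ^ 2 := by positivity
    rw [div_eq_iff (ne_of_gt hpos)] at h
    rw [h]; ring
  have key : ∀ d ∈ Set.Ioo a b, deriv (deriv f) d = 0 →
      HasDerivAt (deriv (deriv f))
        ((1 + deriv f d ^ 2) * (((n:ℝ) - 1) / d ^ 2) * deriv f d) d :=
    fun d hd hd0 => aux_key ha hfd hgd hode' hd hd0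
  have keypos : ∀ d ∈ Set.Ioo a b, deriv (deriv f) d = 0 → 0 < deriv f d →
      ∃ D, 0 < D ∧ HasDerivAt (deriv (deriv f)) D d := by
    intro d hd hd0 hgd0
    refine ⟨_, ?_, key d hd hd0⟩
    have hdpos : 0 < d := lt_of_le_of_lt ha hd.1
    have hm0 : (0:ℝ) < (n:ℝ) - 1 := by linarith
    positivity
  have keyneg : ∀ d ∈ Set.Ioo a b, (fun x => -(deriv (deriv f) x)) d = 0 →
      0 < (fun x => -(deriv f x)) d →
      ∃ D, 0 < D ∧ HasDerivAt (fun x => -(deriv (deriv f) x)) D d := by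
    intro d hd hd0 hgd0
    have hd0' : deriv (deriv f) d = 0 := by simpa using hd0
    have hgd0' : deriv f d < 0 := by simpa using hgd0
    have hdpos : 0 < d := lt_of_le_of_lt ha hd.1
    have hm0 : (0:ℝ) < (n:ℝ) - 1 := by linarith
    have hDneg : (1 + deriv f d ^ 2) * (((n:ℝ) - 1) / d ^ 2) * deriv f d < 0 :=
      mul_neg_of_pos_of_neg (by positivity) hgd0'
    exact ⟨_, by linarith, (key d hd hd0').neg⟩
  have hgdneg : ∀ t ∈ Set.Ioo a b,
      HasDerivAt (fun x => -(deriv f x)) ((fun x => -(deriv (deriv f) x)) t) t :=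
    fun t ht => (hgd t ht).neg
  have hhcneg : ContinuousOn (fun x => -(deriv (deriv f) x)) (Set.Ioo a b) := hhc.neg
  have part1 : 0 < deriv f c →
      (∀ r ∈ Set.Ioo a c, deriv (deriv f) r < 0) ∧
        (∀ r ∈ Set.Ioo c b, 0 < deriv (deriv f) r) := by
    intro hgc
    exact ⟨aux_prop_left hgd hhc keypos hc h2 hgc,
           aux_prop_right hgd hhc keypos hc h2 hgc⟩
  have part2 : deriv f c < 0 →
      (∀ r ∈ Set.Ioo a c, 0 < deriv (deriv f) r) ∧
        (∀ r ∈ Set.Ioo c b, deriv (deriv f) r < 0) := by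
    intro hgc
    have h2' : (fun x => -(deriv (deriv f) x)) c = 0 := by simp [h2]
    have hgc' : 0 < (fun x => -(deriv f x)) c := by simp only []; linarith
    have hL := aux_prop_left hgdneg hhcneg keyneg hc h2' hgc'
    have hR := aux_prop_right hgdneg hhcneg keyneg hc h2' hgc'
    constructor
    · intro r hr
      have h' : -(deriv (deriv f) r) < 0 := hL r hr
      linarith
    · intro r hr
      have h' : 0 < -(deriv (deriv f) r) := hR r hr
      linarith
  refine ⟨part1, part2, ?_⟩
  intro r hr hr0
  rcases lt_trichotomy (deriv f c) 0 with hneg | hzero | hpos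
  · obtain ⟨hL, hR⟩ := part2 hneg
    by_contra hne
    rcases lt_or_gt_of_ne hne with hlt | hgt
    · exact absurd hr0 (ne_of_gt (hL r ⟨hr.1, hlt⟩))
    · exact absurd hr0 (ne_of_lt (hR r ⟨hgt, hr.2⟩))
  · have hfc : f c = -lam := by
      have h := hode' c hc
      rw [h2, hzero] at h
      simp only [ne_eq, OfNat.ofNat_ne_zero, not_false_eq_true, zero_pow, add_zero,
        Real.sqrt_one, mul_zero, zero_mul, one_mul, mul_one] at h
      linarith
    have hall : ∀ r' ∈ Set.Ioo a b, f r' = -lam :=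
      aux_unique ha (by linarith : (0:ℝ) ≤ (n:ℝ) - 1) hfd hgd hode' hc hfc hzero
    exact absurd hall hnc
  · obtain ⟨hL, hR⟩ := part1 hpos
    by_contra hne
    rcases lt_or_gt_of_ne hne with hlt | hgt
    · exact absurd hr0 (ne_of_lt (hL r ⟨hr.1, hlt⟩))
    · exact absurd hr0 (ne_of_gt (hR r ⟨hgt, hr.2⟩))

end StmtAux
end

section
/- Let λ < 0, n ≥ 2, and let u : (0, b) → (0, ∞) be a solution of u''/(1+(u')²) = x·u' − u + (n−1)/u + λ·√(1+(u')²) with u' > 0 and u'' > 0 on (0, b), where b > −λ is finite and u'(x) → ∞ as x → b⁻. Then lim_{x→b⁻} u(x) is finite. -/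
theorem stmt_13 (n : ℕ) (hn : 2 ≤ n) (lam : ℝ) (hlam : lam < 0) (b : ℝ)
    (hb : -lam < b)
    (u : ℝ → ℝ) (hu : ∀ x ∈ Set.Ioo (0 : ℝ) b, 0 < u x)
    (hode : ∀ x ∈ Set.Ioo (0 : ℝ) b,
      deriv (deriv u) x / (1 + (deriv u x) ^ 2)
        = x * deriv u x - u x + ((n : ℝ) - 1) / u x
            + lam * Real.sqrt (1 + (deriv u x) ^ 2))
    (hu' : ∀ x ∈ Set.Ioo (0 : ℝ) b, 0 < deriv u x)
    (hu'' : ∀ x ∈ Set.Ioo (0 : ℝ) b, 0 < deriv (deriv u) x)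
    (hblow : Filter.Tendsto (deriv u) (nhdsWithin b (Set.Iio b)) Filter.atTop) :
    ∃ L : ℝ, Filter.Tendsto u (nhdsWithin b (Set.Iio b)) (nhds L) := by
  have hlampos : 0 < -lam := neg_pos.mpr hlam
  set x0 : ℝ := (b - lam) / 2 with hx0def
  have hx0mem : x0 ∈ Set.Ioo (0 : ℝ) b := ⟨by simp only [hx0def]; linarith,
    by simp only [hx0def]; linarith⟩
  have hc : 0 < x0 + lam := by simp only [hx0def]; linarith
  have hdiff : ∀ x ∈ Set.Ioo (0 : ℝ) b, DifferentiableAt ℝ u x := fun x hx =>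
    differentiableAt_of_deriv_ne_zero (ne_of_gt (hu' x hx))
  have hdiff' : ∀ x ∈ Set.Ioo (0 : ℝ) b, DifferentiableAt ℝ (deriv u) x := fun x hx =>
    differentiableAt_of_deriv_ne_zero (ne_of_gt (hu'' x hx))
  have hsub : Set.Ioo x0 b ⊆ Set.Ioo (0 : ℝ) b :=
    Set.Ioo_subset_Ioo hx0mem.1.le le_rfl
  have hsub2 : Set.Ico x0 b ⊆ Set.Ioo (0 : ℝ) b := fun x hx =>
    ⟨lt_of_lt_of_le hx0mem.1 hx.1, hx.2⟩
  have hu'mono : StrictMonoOn (deriv u) (Set.Ioo (0 : ℝ) b) :=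
    strictMonoOn_of_deriv_pos (convex_Ioo _ _)
      (fun x hx => (hdiff' x hx).continuousAt.continuousWithinAt)
      (by rw [interior_Ioo]; exact hu'')
  -- convexity bound: u x ≤ u x0 + deriv u x * (x - x0) on Ioo x0 b
  have hconv : ∀ x ∈ Set.Ioo x0 b, u x ≤ u x0 + deriv u x * (x - x0) := by
    intro x hx
    have hIcc : Set.Icc x0 x ⊆ Set.Ioo (0 : ℝ) b := fun y hy =>
      ⟨lt_of_lt_of_le hx0mem.1 hy.1, lt_of_le_of_lt hy.2 hx.2⟩
    obtain ⟨ξ, hξ, hξeq⟩ := exists_deriv_eq_slope u hx.1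
      (fun y hy => (hdiff y (hIcc hy)).continuousAt.continuousWithinAt)
      (fun y hy => (hdiff y (hIcc (Set.Ioo_subset_Icc_self hy))).differentiableWithinAt)
    have hξmem : ξ ∈ Set.Ioo (0 : ℝ) b := hIcc (Set.Ioo_subset_Icc_self hξ)
    have hle : deriv u ξ ≤ deriv u x := (hu'mono hξmem (hsub hx) hξ.2).le
    have hx0x : (0 : ℝ) < x - x0 := sub_pos.mpr hx.1
    have := hξeq ▸ hle
    rw [div_le_iff₀ hx0x] at this
    linarith
  -- the auxiliary monotone function
  set C : ℝ := u x0 - lam with hC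
  set g : ℝ → ℝ := fun x => Real.arctan (deriv u x) - (x0 + lam) * u x + C * x with hg
  have hCpos : 0 < C := by have := hu x0 hx0mem; simp only [hC]; linarith
  have hgderiv : ∀ x ∈ Set.Ioo (0 : ℝ) b,
      HasDerivAt g (1 / (1 + (deriv u x) ^ 2) * deriv (deriv u) x
        - (x0 + lam) * deriv u x + C) x := by
    intro x hx
    have h1 : HasDerivAt (fun y => Real.arctan (deriv u y))
        (1 / (1 + (deriv u x) ^ 2) * deriv (deriv u) x) x :=
      (Real.hasDerivAt_arctan (deriv u x)).comp x (hdiff' x hx).hasDerivAt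
    have h2 : HasDerivAt (fun y => (x0 + lam) * u y) ((x0 + lam) * deriv u x) x :=
      (hdiff x hx).hasDerivAt.const_mul _
    have h3 : HasDerivAt (fun y => C * y) C x := by
      simpa using (hasDerivAt_id x).const_mul C
    exact (h1.sub h2).add h3
  have hgd_nonneg : ∀ x ∈ Set.Ioo x0 b, 0 ≤ deriv g x := by
    intro x hx
    have hx' : x ∈ Set.Ioo (0 : ℝ) b := hsub hx
    rw [(hgderiv x hx').deriv]
    have hode' := hode x hx'
    have hu'pos := hu' x hx'
    have hupos := hu x hx'
    have hsq : 0 < 1 + (deriv u x) ^ 2 := by positivity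
    have hsqrt : Real.sqrt (1 + (deriv u x) ^ 2) ≤ 1 + deriv u x := by
      have h1 : Real.sqrt (1 + (deriv u x) ^ 2) ≤ Real.sqrt ((1 + deriv u x) ^ 2) :=
        Real.sqrt_le_sqrt (by nlinarith)
      rwa [Real.sqrt_sq (by linarith)] at h1
    have hlamsqrt : lam * (1 + deriv u x) ≤ lam * Real.sqrt (1 + (deriv u x) ^ 2) :=
      mul_le_mul_of_nonpos_left hsqrt hlam.le
    have hn1 : (0 : ℝ) ≤ ((n : ℝ) - 1) / u x := by
      apply div_nonneg _ hupos.le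
      have : (2 : ℝ) ≤ (n : ℝ) := by exact_mod_cast hn
      linarith
    have hcv := hconv x hx
    have hkey : 0 ≤ deriv (deriv u) x / (1 + (deriv u x) ^ 2)
        - (x0 + lam) * deriv u x + C := by
      rw [hode']
      simp only [hC]
      nlinarith
    calc (0 : ℝ) ≤ deriv (deriv u) x / (1 + (deriv u x) ^ 2)
          - (x0 + lam) * deriv u x + C := hkey
      _ = 1 / (1 + (deriv u x) ^ 2) * deriv (deriv u) x
          - (x0 + lam) * deriv u x + C := by ring
  have hgmono : MonotoneOn g (Set.Ico x0 b) := by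
    apply monotoneOn_of_deriv_nonneg (convex_Ico _ _)
    · intro x hx
      exact ((hgderiv x (hsub2 hx)).differentiableAt.continuousAt).continuousWithinAt
    · intro x hx
      rw [interior_Ico] at hx
      exact ((hgderiv x (hsub2 ⟨hx.1.le, hx.2⟩)).differentiableAt).differentiableWithinAt
    · intro x hx
      rw [interior_Ico] at hx
      exact hgd_nonneg x hx
  -- bound on u
  set M : ℝ := (Real.pi / 2 + C * b - g x0) / (x0 + lam) with hM
  have hbound : ∀ x ∈ Set.Ioo x0 b, u x ≤ M := by
    intro x hx
    have h1 : g x0 ≤ g x := hgmono ⟨le_refl x0, hx0mem.2⟩ ⟨hx.1.le, hx.2⟩ hx.1.le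
    have h2 : Real.arctan (deriv u x) < Real.pi / 2 := Real.arctan_lt_pi_div_two _
    have h3 : C * x ≤ C * b := mul_le_mul_of_nonneg_left hx.2.le hCpos.le
    have : (x0 + lam) * u x ≤ Real.pi / 2 + C * b - g x0 := by
      clear_value x0 C g M
      simp only [hg] at h1 ⊢; linarith
    rw [hM, le_div_iff₀ hc]
    linarith [this]
  have humonoOn : MonotoneOn u (Set.Ioo x0 b) := by
    intro x hx y hy hxy
    rcases eq_or_lt_of_le hxy with rfl | h
    · exact le_rfl
    · exact (strictMonoOn_of_deriv_pos (convex_Ioo _ _)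
        (fun z hz => (hdiff z hz).continuousAt.continuousWithinAt)
        (by rw [interior_Ioo]; exact hu') (hsub hx) (hsub hy) h).le
  have hbdd : BddAbove (u '' Set.Ioo x0 b) := by
    refine ⟨M, ?_⟩
    rintro y ⟨x, hx, rfl⟩
    exact hbound x hx
  have hne : (Set.Ioo x0 b).Nonempty := Set.nonempty_Ioo.mpr hx0mem.2
  exact ⟨_, MonotoneOn.tendsto_nhdsWithin_Ioo_left hne humonoOn hbdd⟩
end

section
/- Let λ < 0, n ≥ 2, c > 0, and suppose φ : [c, b) → (0, ∞) is C² with φ'' > (c + λ̃)·φ'·φ² and φ' > 0 on (c, b), where −λ < −λ̃ and c + λ̃ > 0. For ε > 0 small, set φ_ε(x) = M/√(b−ε−x) with M > 0 chosen so that φ(c) ≤ M/√(b−c) and 3/(2M²) ≤ c + λ̃. Then φ(x) ≤ φ_ε(x) for all x ∈ [c, b−ε). -/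
/-!
Put `ψ x = M / √(b - ε - x)` and `g = ψ - φ`. Then `g c ≥ 0`, and `g → +∞` at `b - ε` because `φ`
stays bounded there, so a negative value of `g` forces a negative interior minimum `ξ`. At `ξ` we
have `ψ' = φ'` and `0 < ψ < φ`; as `ψ` solves `ψ'' = 3/(2M²) · ψ' ψ²`, this gives
`ψ'' ≤ (c + λ̃) ψ' ψ² < (c + λ̃) φ' φ² < φ''` at `ξ`, contradicting `g''(ξ) ≥ 0`.
-/

open Set Filter Topology

theorem IsLocalMin.deriv_deriv_nonneg {f : ℝ → ℝ} {x₀ : ℝ} (h : IsLocalMin f x₀)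
    (hc : ContinuousAt f x₀) : 0 ≤ deriv (deriv f) x₀ := by
  by_contra! hneg
  -- by the second-derivative test `x₀` is also a local maximum, so `f` is locally constant
  have hmax := isLocalMax_of_deriv_deriv_neg hneg h.deriv_eq_zero hc
  have hconst : f =ᶠ[𝓝 x₀] fun _ => f x₀ :=
    (h.and hmax).mono fun _ hy => le_antisymm hy.2 hy.1
  simp [hconst.deriv.deriv_eq] at hneg

theorem exists_isLocalMin_neg_of_tendsto_atTop {g : ℝ → ℝ} {c a x₀ : ℝ}
    (hg : ContinuousOn g (Ico c a)) (hc : 0 ≤ g c) (hblow : Tendsto g (𝓝[<] a) atTop)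
    (hx₀ : x₀ ∈ Ico c a) (hneg : g x₀ < 0) : ∃ ξ ∈ Ioo c a, IsLocalMin g ξ ∧ g ξ < 0 := by
  obtain ⟨x₁, hgx₁, hx₁⟩ := ((hblow.eventually_gt_atTop 0).and (Ioo_mem_nhdsLT hx₀.2)).exists
  obtain ⟨ξ, hξ, hmin⟩ := isCompact_Icc.exists_isMinOn (nonempty_Icc.2 (hx₀.1.trans hx₁.1.le))
    (hg.mono (Icc_subset_Ico_right hx₁.2))
  have hgξ : g ξ < 0 := (hmin ⟨hx₀.1, hx₁.1.le⟩).trans_lt hneg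
  have hξ' : ξ ∈ Ioo c x₁ :=
    ⟨hξ.1.lt_of_ne (by rintro rfl; linarith), hξ.2.lt_of_ne (by rintro rfl; linarith)⟩
  exact ⟨ξ, ⟨hξ'.1, hξ'.2.trans hx₁.2⟩, hmin.isLocalMin (Icc_mem_nhds hξ'.1 hξ'.2), hgξ⟩

section TwiceDifferentiable

variable {f g : ℝ → ℝ} {s : Set ℝ} {x : ℝ}

theorem ContDiffOn.differentiableAt_of_isOpen (hf : ContDiffOn ℝ 2 f s) (hs : IsOpen s)
    (hx : x ∈ s) : DifferentiableAt ℝ f x :=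
  (hf.differentiableOn (by norm_num)).differentiableAt (hs.mem_nhds hx)

theorem ContDiffOn.differentiableAt_deriv_of_isOpen (hf : ContDiffOn ℝ 2 f s) (hs : IsOpen s)
    (hx : x ∈ s) : DifferentiableAt ℝ (deriv f) x :=
  ((hf.deriv_of_isOpen hs (by norm_num : (1 : WithTop ℕ∞) + 1 ≤ 2)).differentiableOn
    one_ne_zero).differentiableAt (hs.mem_nhds hx)

theorem ContDiffOn.deriv_deriv_sub (hf : ContDiffOn ℝ 2 f s) (hg : ContDiffOn ℝ 2 g s)
    (hs : IsOpen s) (hx : x ∈ s) :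
    deriv (deriv fun y => f y - g y) x = deriv (deriv f) x - deriv (deriv g) x := by
  have hderiv : deriv (fun y => f y - g y) =ᶠ[𝓝 x] fun y => deriv f y - deriv g y := by
    filter_upwards [hs.mem_nhds hx] with y hy
    exact deriv_sub (hf.differentiableAt_of_isOpen hs hy) (hg.differentiableAt_of_isOpen hs hy)
  rw [hderiv.deriv_eq]
  exact deriv_sub (hf.differentiableAt_deriv_of_isOpen hs hx)
    (hg.differentiableAt_deriv_of_isOpen hs hx)

end TwiceDifferentiable

theorem le_of_deriv_deriv_lt_at_contact {φ ψ : ℝ → ℝ} {c a : ℝ}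
    (hφ : ContDiffOn ℝ 2 φ (Ico c a)) (hψ : ContDiffOn ℝ 2 ψ (Ico c a)) (hc : φ c ≤ ψ c)
    (hblow : Tendsto (fun x => ψ x - φ x) (𝓝[<] a) atTop)
    (hcontact : ∀ x ∈ Ioo c a, ψ x < φ x → deriv ψ x = deriv φ x →
      deriv (deriv ψ) x < deriv (deriv φ) x) :
    ∀ x ∈ Ico c a, φ x ≤ ψ x := by
  intro x hx
  by_contra! hlt
  have hφIoo := hφ.mono Ioo_subset_Ico_self
  have hψIoo := hψ.mono Ioo_subset_Ico_self
  obtain ⟨ξ, hξ, hmin, hneg⟩ := exists_isLocalMin_neg_of_tendsto_atTop (g := fun x => ψ x - φ x)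
    (hψ.continuousOn.sub hφ.continuousOn) (sub_nonneg.2 hc) hblow hx (sub_neg.2 hlt)
  have hslope : deriv ψ ξ = deriv φ ξ := by
    have h := hmin.deriv_eq_zero
    rw [deriv_fun_sub (hψIoo.differentiableAt_of_isOpen isOpen_Ioo hξ)
      (hφIoo.differentiableAt_of_isOpen isOpen_Ioo hξ)] at h
    linarith
  have hconvex := hmin.deriv_deriv_nonneg
    ((hψIoo.continuousOn.sub hφIoo.continuousOn).continuousAt (isOpen_Ioo.mem_nhds hξ))
  rw [hψIoo.deriv_deriv_sub hφIoo isOpen_Ioo hξ] at hconvex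
  linarith [hcontact ξ hξ (sub_neg.1 hneg) hslope]

section Barrier

variable {a x : ℝ}

theorem hasDerivAt_inv_sqrt_sub (hx : x < a) :
    HasDerivAt (fun y => (√(a - y))⁻¹) ((√(a - x))⁻¹ ^ 3 / 2) x := by
  have hax : 0 < a - x := sub_pos.2 hx
  have hsqrt : 0 < √(a - x) := Real.sqrt_pos.2 hax
  refine ((((hasDerivAt_id' x).const_sub a).sqrt hax.ne').inv hsqrt.ne').congr_deriv ?_
  field_simp

theorem hasDerivAt_div_sqrt_sub (M : ℝ) (hx : x < a) :
    HasDerivAt (fun y => M / √(a - y)) (M / 2 * (√(a - x))⁻¹ ^ 3) x := by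
  have h := (hasDerivAt_inv_sqrt_sub hx).const_mul M
  simp only [← div_eq_mul_inv] at h
  exact h.congr_deriv (by ring)

theorem deriv_div_sqrt_sub (M : ℝ) (hx : x < a) :
    deriv (fun y => M / √(a - y)) x = M / 2 * (√(a - x))⁻¹ ^ 3 :=
  (hasDerivAt_div_sqrt_sub M hx).deriv

theorem deriv_deriv_div_sqrt_sub (M : ℝ) (hx : x < a) :
    deriv (deriv fun y => M / √(a - y)) x = 3 * M / 4 * (√(a - x))⁻¹ ^ 5 := by
  have hderiv : deriv (fun y => M / √(a - y)) =ᶠ[𝓝 x] fun y => M / 2 * (√(a - y))⁻¹ ^ 3 := by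
    filter_upwards [Iio_mem_nhds hx] with y hy using deriv_div_sqrt_sub M hy
  rw [hderiv.deriv_eq, (((hasDerivAt_inv_sqrt_sub hx).fun_pow 3).const_mul (M / 2)).deriv]
  ring

theorem deriv_deriv_div_sqrt_sub_eq {M : ℝ} (hM : M ≠ 0) (hx : x < a) :
    deriv (deriv fun y => M / √(a - y)) x =
      3 / (2 * M ^ 2) * deriv (fun y => M / √(a - y)) x * (M / √(a - x)) ^ 2 := by
  rw [deriv_deriv_div_sqrt_sub M hx, deriv_div_sqrt_sub M hx]
  field_simp
  ring

theorem deriv_deriv_div_sqrt_sub_lt_of_contact {M k : ℝ} {φ : ℝ → ℝ} (hM : 0 < M)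
    (hk : 3 / (2 * M ^ 2) ≤ k) (hx : x < a) (hlt : M / √(a - x) < φ x)
    (hslope : deriv (fun y => M / √(a - y)) x = deriv φ x) :
    deriv (deriv fun y => M / √(a - y)) x < k * deriv φ x * φ x ^ 2 := by
  have hsqrt : 0 < √(a - x) := Real.sqrt_pos.2 (sub_pos.2 hx)
  have hslope_pos : 0 < deriv (fun y => M / √(a - y)) x := by
    rw [deriv_div_sqrt_sub M hx]
    positivity
  have hk_pos : 0 < k := (by positivity : (0 : ℝ) < 3 / (2 * M ^ 2)).trans_le hk
  calc deriv (deriv fun y => M / √(a - y)) x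
      = 3 / (2 * M ^ 2) * deriv (fun y => M / √(a - y)) x * (M / √(a - x)) ^ 2 :=
        deriv_deriv_div_sqrt_sub_eq hM.ne' hx
    _ ≤ k * deriv (fun y => M / √(a - y)) x * (M / √(a - x)) ^ 2 := by gcongr
    _ < k * deriv φ x * φ x ^ 2 := by
        rw [← hslope]
        gcongr

theorem contDiffOn_div_sqrt_sub (M a : ℝ) {n : WithTop ℕ∞} :
    ContDiffOn ℝ n (fun y => M / √(a - y)) (Iio a) := fun _ hy =>
  (contDiffAt_const.div ((contDiffAt_const.sub contDiffAt_id).sqrt (sub_pos.2 hy).ne')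
    (Real.sqrt_pos.2 (sub_pos.2 hy)).ne').contDiffWithinAt

theorem tendsto_div_sqrt_sub_atTop {M : ℝ} (hM : 0 < M) :
    Tendsto (fun y => M / √(a - y)) (𝓝[<] a) atTop := by
  have hsqrt : Tendsto (fun y => √(a - y)) (𝓝[<] a) (𝓝[>] 0) := by
    refine tendsto_nhdsWithin_iff.2 ⟨?_, ?_⟩
    · have h : Continuous fun y => √(a - y) := by fun_prop
      simpa using (h.tendsto a).mono_left nhdsWithin_le_nhds
    · filter_upwards [self_mem_nhdsWithin] with y hy using Real.sqrt_pos.2 (sub_pos.2 hy)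
  simpa only [div_eq_mul_inv, Function.comp_def] using
    (tendsto_inv_nhdsGT_zero.comp hsqrt).const_mul_atTop hM

end Barrier

theorem stmt_14_general (lamt : ℝ) (c b : ℝ)
    (φ : ℝ → ℝ) (hφC2 : ContDiffOn ℝ 2 φ (Set.Ico c b))
    (hφ'' : ∀ x ∈ Set.Ioo c b,
      (c + lamt) * deriv φ x * (φ x) ^ 2 < deriv (deriv φ) x)
    (M : ℝ) (hM : 0 < M) (hMc : φ c ≤ M / Real.sqrt (b - c))
    (hM2 : 3 / (2 * M ^ 2) ≤ c + lamt)
    (ε : ℝ) (hε : 0 < ε) (hεb : ε < b - c) :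
    ∀ x ∈ Set.Ico c (b - ε), φ x ≤ M / Real.sqrt (b - ε - x) := by
  have hca : c < b - ε := by linarith
  have hab : b - ε < b := by linarith
  refine le_of_deriv_deriv_lt_at_contact (hφC2.mono (Ico_subset_Ico_right hab.le))
    ((contDiffOn_div_sqrt_sub M _).mono fun _ hx => hx.2) ?_ ?_ ?_
  · calc φ c ≤ M / √(b - c) := hMc
      _ ≤ M / √(b - ε - c) := by gcongr
  · obtain ⟨K, hK⟩ := isCompact_Icc.bddAbove_image
      (hφC2.continuousOn.mono (Icc_subset_Ico_right hab))
    simp only [sub_eq_add_neg _ (φ _)]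
    refine tendsto_atTop_add_right_of_le' _ (-K) (tendsto_div_sqrt_sub_atTop hM) ?_
    filter_upwards [Ioo_mem_nhdsLT hca] with x hx
    exact neg_le_neg (hK (mem_image_of_mem φ (Ioo_subset_Icc_self hx)))
  · intro x hx hlt hslope
    exact (deriv_deriv_div_sqrt_sub_lt_of_contact hM hM2 hx.2 hlt hslope).trans
      (hφ'' x ⟨hx.1, hx.2.trans hab⟩)

/-- The barrier comparison lemma: if `φ'' > (c+λ̃)·φ'·φ²`, `φ' > 0`, and
`φ_ε(x) = M/√(b−ε−x)` dominates `φ` at `c` with `3/(2M²) ≤ c + λ̃`, then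
`φ ≤ φ_ε` on `[c, b−ε)`. -/
theorem stmt_14 (lam lamt : ℝ) (hlam : lam < 0) (hlamt : -lam < -lamt)
    (c b : ℝ) (hc : 0 < c) (hcb : c < b) (hpos : 0 < c + lamt)
    (φ : ℝ → ℝ) (hφC2 : ContDiffOn ℝ 2 φ (Set.Ico c b))
    (hφpos : ∀ x ∈ Set.Ico c b, 0 < φ x)
    (hφ' : ∀ x ∈ Set.Ioo c b, 0 < deriv φ x)
    (hφ'' : ∀ x ∈ Set.Ioo c b,
      (c + lamt) * deriv φ x * (φ x) ^ 2 < deriv (deriv φ) x)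
    (M : ℝ) (hM : 0 < M) (hMc : φ c ≤ M / Real.sqrt (b - c))
    (hM2 : 3 / (2 * M ^ 2) ≤ c + lamt)
    (ε : ℝ) (hε : 0 < ε) (hεb : ε < b - c) :
    ∀ x ∈ Set.Ico c (b - ε), φ x ≤ M / Real.sqrt (b - ε - x) :=
  stmt_14_general lamt c b φ hφC2 hφ'' M hM hMc hM2 ε hε hεb
end

section
/- Let n ≥ 2 and λ ∈ ℝ, and suppose (x(s), r(s), θ(s)) solves ẋ = cos θ, ṙ = sin θ, θ̇ = ((n−1)/r − r)·cos θ + x·sin θ + λ on an interval. If at some s₀ one has r(s₀) > (√2(π+|λ|) + √(2(π+|λ|)² + 4(n−1)))/2 and x(s₀) > √2(π+|λ|) and π/2 ≤ θ(s₀) ≤ 3π/4, then θ̇(s₀) > π. -/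
theorem stmt_15 (n : ℕ) (hn : 2 ≤ n) (lam : ℝ) (x r θ : ℝ → ℝ) (I : Set ℝ)
    (hI : IsOpen I)
    (hx : ∀ s ∈ I, deriv x s = Real.cos (θ s))
    (hr : ∀ s ∈ I, deriv r s = Real.sin (θ s))
    (hθ : ∀ s ∈ I, deriv θ s
      = (((n : ℝ) - 1) / r s - r s) * Real.cos (θ s) + x s * Real.sin (θ s) + lam)
    (s₀ : ℝ) (hs₀ : s₀ ∈ I)
    (hrbig : (Real.sqrt 2 * (Real.pi + |lam|)
        + Real.sqrt (2 * (Real.pi + |lam|) ^ 2 + 4 * ((n : ℝ) - 1))) / 2 < r s₀)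
    (hxbig : Real.sqrt 2 * (Real.pi + |lam|) < x s₀)
    (hθ₁ : Real.pi / 2 ≤ θ s₀) (hθ₂ : θ s₀ ≤ 3 * Real.pi / 4) :
    Real.pi < deriv θ s₀ := by
  have hpi := Real.pi_pos
  have hpil : 0 < Real.pi + |lam| := by positivity
  have hs2 : Real.sqrt 2 * Real.sqrt 2 = 2 := Real.mul_self_sqrt (by norm_num)
  have hs2pos : 0 < Real.sqrt 2 := Real.sqrt_pos.mpr (by norm_num)
  have hn1 : (1:ℝ) ≤ (n:ℝ) - 1 := by
    have : (2:ℝ) ≤ (n:ℝ) := by exact_mod_cast hn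
    linarith
  set B := Real.sqrt (2 * (Real.pi + |lam|) ^ 2 + 4 * ((n : ℝ) - 1)) with hB
  have hBnn : 0 ≤ B := Real.sqrt_nonneg _
  have hBsq : B ^ 2 = 2 * (Real.pi + |lam|) ^ 2 + 4 * ((n : ℝ) - 1) :=
    Real.sq_sqrt (by nlinarith)
  have hAnn : 0 < Real.sqrt 2 * (Real.pi + |lam|) := by positivity
  have hr0 : 0 < r s₀ := by nlinarith
  have hrsq : (n:ℝ) - 1 ≤ r s₀ * r s₀ := by nlinarith
  have hcos : Real.cos (θ s₀) ≤ 0 :=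
    Real.cos_nonpos_of_pi_div_two_le_of_le hθ₁ (by linarith)
  have hsin : Real.sqrt 2 / 2 ≤ Real.sin (θ s₀) := by
    have h1 : Real.sin (Real.pi - θ s₀) = Real.sin (θ s₀) := Real.sin_pi_sub _
    have h2 : Real.sin (Real.pi / 4) ≤ Real.sin (Real.pi - θ s₀) := by
      apply Real.strictMonoOn_sin.monotoneOn
      · constructor <;> [linarith; linarith]
      · constructor <;> [linarith; linarith]
      · linarith
    rw [Real.sin_pi_div_four] at h2
    linarith
  have hdiv : ((n:ℝ) - 1) / r s₀ - r s₀ ≤ 0 := by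
    have : ((n:ℝ) - 1) / r s₀ ≤ r s₀ := (div_le_iff₀ hr0).mpr hrsq
    linarith
  have hterm1 : 0 ≤ (((n:ℝ) - 1) / r s₀ - r s₀) * Real.cos (θ s₀) :=
    by nlinarith [mul_nonneg (neg_nonneg.mpr hdiv) (neg_nonneg.mpr hcos)]
  have hterm2 : Real.pi + |lam| < x s₀ * Real.sin (θ s₀) := by
    have hx0 : 0 < x s₀ := lt_trans hAnn hxbig
    nlinarith
  have hlam : -|lam| ≤ lam := neg_abs_le lam
  rw [hθ s₀ hs₀]
  linarith
end
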